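/- arXiv:1810.03223 — 6 statements merged into one kernel-verified Lean document; each statement's English description precedes it below -/
import Mathlib

section
/- Let ξ: [0,1) → [0,1) be a generalized Lüroth map for a partition (W_i) of [0,1) into half-open intervals (i.e., ξ maps each W_i affinely and increasingly onto [0,1)). If for each n, φ_n: [0,1) → ℝ is measurable with respect to the σ-algebra generated by the partition (W_i), then the random variables (φ_n ∘ ξ^{n-1})_{n≥1} are mutually independent with respect to Lebesgue measure. -/
open MeasureTheory ProbabilityTheory Set Function

/-!
On each interval `W_i` the map `ξ` is an increasing affine bijection onto `[0,1)`, so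
`λ(W_i ∩ ξ⁻¹ A) = λ(W_i) λ(A ∩ [0,1))` for every Borel `A`: the partition is independent of
`ξ⁻¹ 𝓑`, and summing over `i` shows that `ξ` preserves `λ` on `[0,1)`. Iterating, a cylinder
`W_{i_0} ∩ ξ⁻¹ W_{i_1} ∩ ⋯ ∩ ξ^{-(k-1)} W_{i_{k-1}}` has measure `∏ λ(W_{i_j})`, which is the
independence of the σ-algebras `ξ^{-n} σ(W)` on their generating π-systems; each `φ_n ∘ ξ^n`
is measurable with respect to `ξ^{-n} σ(W)`.
-/

namespace MeasureTheory

theorem isPiSystem_setOf_eq_of_pairwise_disjoint {α ι : Type*} {P : ι → Set α}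
    (hP : Pairwise (Disjoint on P)) : IsPiSystem {S | ∃ i, S = P i} := by
  rintro _ ⟨i, rfl⟩ _ ⟨j, rfl⟩ hij
  obtain rfl : i = j := by
    by_contra hne
    exact hij.ne_empty (hP hne).inter_eq
  exact ⟨i, inter_self _⟩

variable {α : Type*} [MeasurableSpace α] {μ : Measure α} {T : α → α} {C : Set (Set α)}

theorem measurePreserving_of_measure_inter_preimage [IsProbabilityMeasure μ] {ι : Type*}
    [Countable ι] {P : ι → Set α} (hPm : ∀ i, MeasurableSet (P i))
    (hPd : Pairwise (Disjoint on P)) (hP : μ (⋃ i, P i)ᶜ = 0) (hT : Measurable T)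
    (hmix : ∀ i A, MeasurableSet A → μ (P i ∩ T ⁻¹' A) = μ (P i) * μ A) :
    MeasurePreserving T μ μ := by
  refine ⟨hT, Measure.ext fun A hA => ?_⟩
  have hPμ : ∑' i, μ (P i) = 1 := by
    rw [← measure_iUnion hPd hPm, ← prob_compl_eq_zero_iff (MeasurableSet.iUnion hPm), hP]
  calc μ.map T A = μ (⋃ i, P i ∩ T ⁻¹' A) := by
        rw [Measure.map_apply hT hA, ← iUnion_inter, inter_comm, measure_inter_conull hP]
    _ = ∑' i, μ (P i) * μ A := by
        rw [measure_iUnion (hPd.mono fun i j h => h.mono inter_subset_left inter_subset_left)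
          fun i => (hPm i).inter (hT hA)]
        exact tsum_congr fun i => hmix i A hA
    _ = μ A := by rw [ENNReal.tsum_mul_right, hPμ, one_mul]

theorem measure_biInter_range_preimage_iterate [IsProbabilityMeasure μ] (hT : Measurable T)
    (hCm : ∀ P ∈ C, MeasurableSet P)
    (hmix : ∀ P ∈ C, ∀ A, MeasurableSet A → μ (P ∩ T ⁻¹' A) = μ P * μ A)
    (k : ℕ) {B : ℕ → Set α} (hB : ∀ j, B j ∈ C) :
    μ (⋂ j ∈ Finset.range k, T^[j] ⁻¹' B j) = ∏ j ∈ Finset.range k, μ (B j) := by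
  induction k generalizing B with
  | zero => simp
  | succ k ih =>
    have hsplit : ⋂ j ∈ Finset.range (k + 1), T^[j] ⁻¹' B j
        = B 0 ∩ T ⁻¹' ⋂ j ∈ Finset.range k, T^[j] ⁻¹' B (j + 1) := by
      ext x
      simp only [mem_iInter, Finset.mem_range, mem_inter_iff, mem_preimage,
        Nat.forall_lt_succ_left, iterate_zero_apply, iterate_succ_apply]
    have hm : MeasurableSet (⋂ j ∈ Finset.range k, T^[j] ⁻¹' B (j + 1)) :=
      Finset.measurableSet_biInter _ fun j _ => hT.iterate j (hCm _ (hB _))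
    rw [hsplit, hmix _ (hB 0) _ hm, ih fun j => hB (j + 1), Finset.prod_range_succ', mul_comm]

theorem iIndepSets_image_preimage_iterate [IsProbabilityMeasure μ] (hT : MeasurePreserving T μ μ)
    (hCm : ∀ P ∈ C, MeasurableSet P)
    (hmix : ∀ P ∈ C, ∀ A, MeasurableSet A → μ (P ∩ T ⁻¹' A) = μ P * μ A) :
    iIndepSets (fun n => (T^[n] ⁻¹' ·) '' C) μ := by
  have hmix' : ∀ P ∈ insert univ C, ∀ A, MeasurableSet A → μ (P ∩ T ⁻¹' A) = μ P * μ A := by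
    rintro P (rfl | hP) A hA
    · rw [univ_inter, measure_univ, one_mul, hT.measure_preimage hA.nullMeasurableSet]
    · exact hmix P hP A hA
  have hCm' : ∀ P ∈ insert univ C, MeasurableSet P := by
    rintro P (rfl | hP)
    exacts [MeasurableSet.univ, hCm P hP]
  rw [iIndepSets_iff]
  intro s f hf
  choose! B hBC hfB using hf
  classical
  -- pad the cylinder with `univ` outside `s` to reach an initial segment `range k`
  set B' : ℕ → Set α := fun j => if j ∈ s then B j else univ
  have hB' : ∀ j, B' j ∈ insert univ C := fun j => by
    by_cases hj : j ∈ s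
    · simp [B', hj, hBC j hj]
    · simp [B', hj]
  obtain ⟨k, hsk⟩ := s.exists_nat_subset_range
  have hinter : ⋂ i ∈ s, f i = ⋂ j ∈ Finset.range k, T^[j] ⁻¹' B' j := by
    ext x
    simp only [mem_iInter, Finset.mem_range, mem_preimage]
    refine ⟨fun h j _ => ?_, fun h i hi => ?_⟩
    · by_cases hj : j ∈ s
      · simpa [B', hj, ← hfB j hj] using h j hj
      · simp [B', hj]
    · simpa [B', hi, ← hfB i hi] using h i (Finset.mem_range.1 (hsk hi))
  have hμf : ∀ i ∈ s, μ (f i) = μ (B' i) := fun i hi => by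
    rw [← hfB i hi, (hT.iterate i).measure_preimage (hCm _ (hBC i hi)).nullMeasurableSet]
    simp [B', hi]
  rw [hinter, measure_biInter_range_preimage_iterate hT.measurable hCm' hmix' k hB',
    ← Finset.prod_subset hsk fun j _ hj => by simp [B', hj]]
  exact Finset.prod_congr rfl fun i hi => (hμf i hi).symm

theorem iIndep_comap_iterate_generateFrom [IsProbabilityMeasure μ] (hT : MeasurePreserving T μ μ)
    (hC : IsPiSystem C) (hCm : ∀ P ∈ C, MeasurableSet P)
    (hmix : ∀ P ∈ C, ∀ A, MeasurableSet A → μ (P ∩ T ⁻¹' A) = μ P * μ A) :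
    iIndep (fun n => (MeasurableSpace.generateFrom C).comap T^[n]) μ :=
  iIndepSets.iIndep
    (fun n => (MeasurableSpace.comap_mono (MeasurableSpace.generateFrom_le hCm)).trans
      (hT.measurable.iterate n).comap_le)
    _ (fun _ => hC.comap _) (fun _ => MeasurableSpace.comap_generateFrom)
    (iIndepSets_image_preimage_iterate hT hCm hmix)

end MeasureTheory

section Luroth

variable {c d : ℝ} {ξ : ℝ → ℝ}

theorem Real.volume_preimage_sub_div (c : ℝ) {r : ℝ} (hr : 0 < r) (S : Set ℝ) :
    volume ((fun x => (x - c) / r) ⁻¹' S) = ENNReal.ofReal r * volume S := by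
  have hcomp : (fun x : ℝ => (x - c) / r) = (· * r⁻¹) ∘ (· + -c) := by
    ext x; simp [div_eq_mul_inv, sub_eq_add_neg]
  rw [hcomp, preimage_comp, measure_preimage_add_right,
    Real.volume_preimage_mul_right (inv_ne_zero hr.ne'), inv_inv, abs_of_pos hr]

theorem Ico_inter_preimage_eq_preimage_sub_div (hcd : c < d)
    (hξ : ∀ x ∈ Ico c d, ξ x = (x - c) / (d - c)) (A : Set ℝ) :
    Ico c d ∩ ξ ⁻¹' A = (fun x => (x - c) / (d - c)) ⁻¹' (A ∩ Ico 0 1) := by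
  have hr : 0 < d - c := sub_pos.2 hcd
  ext x
  by_cases hx : x ∈ Ico c d
  · have h01 : (x - c) / (d - c) ∈ Ico (0 : ℝ) 1 := by
      rw [mem_Ico] at hx ⊢
      exact ⟨div_nonneg (by linarith) hr.le, (div_lt_one hr).2 (by linarith)⟩
    simp [hx, hξ x hx, h01]
  · have h01 : (x - c) / (d - c) ∉ Ico (0 : ℝ) 1 := by
      rw [mem_Ico, le_div_iff₀ hr, div_lt_one hr]
      rw [mem_Ico] at hx
      intro h; exact hx ⟨by linarith, by linarith⟩
    simp [hx, h01]

theorem volume_restrict_Ico_inter_preimage (hcd : c < d) (h01 : Ico c d ⊆ Ico 0 1)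
    (hξ : ∀ x ∈ Ico c d, ξ x = (x - c) / (d - c)) (A : Set ℝ) :
    volume.restrict (Ico 0 1) (Ico c d ∩ ξ ⁻¹' A)
      = volume.restrict (Ico 0 1) (Ico c d) * volume.restrict (Ico 0 1) A := by
  rw [Measure.restrict_apply' measurableSet_Ico, Measure.restrict_apply' measurableSet_Ico,
    Measure.restrict_apply' measurableSet_Ico, inter_eq_left.2 h01,
    inter_eq_left.2 (inter_subset_left.trans h01),
    Ico_inter_preimage_eq_preimage_sub_div hcd hξ, Real.volume_preimage_sub_div _ (sub_pos.2 hcd),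
    Real.volume_Ico]

end Luroth

/-- For a generalized Lüroth map `ξ` associated to a partition of `[0,1)` into half-open
intervals `W_i = [c_i, d_i)` (so `ξ` maps each `W_i` affinely and increasingly onto `[0,1)`),
if each `φ_n : [0,1) → ℝ` is measurable with respect to the σ-algebra generated by the
partition `(W_i)`, then the random variables `(φ_n ∘ ξ^{n-1})_{n ≥ 1}` are mutually independent
with respect to Lebesgue measure on `[0,1)`. -/
theorem stmt4 {I : Type*} [Countable I] (c d : I → ℝ) (hcd : ∀ i, c i < d i)
    (hdisj : Pairwise (Function.onFun Disjoint (fun i => Set.Ico (c i) (d i))))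
    (hcover : (⋃ i, Set.Ico (c i) (d i)) = Set.Ico (0 : ℝ) 1)
    (ξ : ℝ → ℝ) (hmeas : Measurable ξ)
    (hξ : ∀ i, ∀ x ∈ Set.Ico (c i) (d i), ξ x = (x - c i) / (d i - c i))
    (φ : ℕ → ℝ → ℝ)
    (hφ : ∀ n, @Measurable ℝ ℝ
      (MeasurableSpace.generateFrom {S : Set ℝ | ∃ i, S = Set.Ico (c i) (d i)}) _ (φ n)) :
    ProbabilityTheory.iIndepFun (m := fun _ : ℕ => Real.measurableSpace)
      (fun n x => φ n (ξ^[n] x)) (volume.restrict (Set.Ico (0 : ℝ) 1)) := by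
  set μ := volume.restrict (Ico (0 : ℝ) 1)
  have : IsProbabilityMeasure μ := ⟨by simp [μ]⟩
  have hmix : ∀ i A, μ (Ico (c i) (d i) ∩ ξ ⁻¹' A) = μ (Ico (c i) (d i)) * μ A := fun i =>
    volume_restrict_Ico_inter_preimage (hcd i) (hcover ▸ subset_iUnion (fun i => Ico (c i) (d i)) i) (hξ i)
  have hξμ : MeasurePreserving ξ μ μ :=
    measurePreserving_of_measure_inter_preimage (fun _ => measurableSet_Ico) hdisj
      (by simp [μ, hcover]) hmeas fun i A _ => hmix i A
  have hind := iIndep_comap_iterate_generateFrom hξμ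
    (isPiSystem_setOf_eq_of_pairwise_disjoint hdisj)
    (by rintro _ ⟨i, rfl⟩; exact measurableSet_Ico) (by rintro _ ⟨i, rfl⟩ A -; exact hmix i A)
  exact ((iIndepFun_iff_iIndep _ (fun n => ξ^[n]) μ).2 hind).comp φ hφ
end

section
/- For the doubling map τ(x) = 2x mod 1 and digits a_n = χ ∘ τ^{n-1} with χ(x) = ⌊1/x⌋: if x ∈ [0,1) has no finite binary expansion and a_i(x) = r ≥ 2, then for all natural numbers j ≤ ⌊log₂ r⌋ one has a_{i+j}(x) = ⌊r/2^j⌋. -/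
open MeasureTheory Set

/-- The doubling map `τ(x) = 2x mod 1`. -/
noncomputable def tau (x : ℝ) : ℝ := Int.fract (2 * x)

/-- `x` has a finite binary expansion. -/
def FiniteBinary (x : ℝ) : Prop := ∃ k n : ℕ, x = (k : ℝ) / 2 ^ n

/-! If `⌊1/y⌋ = r` and `2^j ≤ r`, then `2^j y ≤ 1`, and equality would give `y` a finite binary
expansion; so the first `j` doublings of `y` never wrap around, `τ^j y = 2^j y`, and
`⌊1/(2^j y)⌋ = ⌊⌊1/y⌋ / 2^j⌋ = ⌊r/2^j⌋`. Finite binary expansions are pulled back along `τ`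
on `[0, ∞)`, so `τ^i x` inherits the hypothesis on `x`. -/

lemma FiniteBinary.zero : FiniteBinary 0 := ⟨0, 0, by simp⟩

lemma FiniteBinary.of_two_pow_mul_eq_one {y : ℝ} {n : ℕ} (h : 2 ^ n * y = 1) :
    FiniteBinary y :=
  ⟨1, n, by rw [Nat.cast_one, eq_div_iff (by positivity), mul_comm, h]⟩

lemma FiniteBinary.of_tau {x : ℝ} (hx : 0 ≤ x) (h : FiniteBinary (tau x)) : FiniteBinary x := by
  obtain ⟨k, n, hk⟩ := h
  obtain ⟨m, hm⟩ : ∃ m : ℕ, (m : ℤ) = ⌊2 * x⌋ :=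
    ⟨⌊2 * x⌋.toNat, Int.toNat_of_nonneg (by positivity)⟩
  have h2x : 2 * x = k / 2 ^ n + m := by
    rw [← hk, tau, ← Int.cast_natCast, hm, Int.fract_add_floor]
  refine ⟨k + m * 2 ^ n, n + 1, ?_⟩
  push_cast
  rw [pow_succ]
  field_simp at h2x ⊢
  linarith

lemma FiniteBinary.of_iterate_tau {x : ℝ} (hx : 0 ≤ x) {n : ℕ}
    (h : FiniteBinary (tau^[n] x)) : FiniteBinary x := by
  induction n generalizing x with
  | zero => exact h
  | succ n ih => exact .of_tau hx (ih (Int.fract_nonneg _) h)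

lemma iterate_tau_nonneg {x : ℝ} (hx : 0 ≤ x) : ∀ n : ℕ, 0 ≤ tau^[n] x
  | 0 => hx
  | n + 1 => by rw [Function.iterate_succ_apply']; exact Int.fract_nonneg _

lemma tau_eq_two_mul {x : ℝ} (hx : 0 ≤ x) (h : 2 * x < 1) : tau x = 2 * x :=
  Int.fract_eq_self.2 ⟨by positivity, h⟩

lemma iterate_tau_eq_two_pow_mul {y : ℝ} (hy : 0 ≤ y) :
    ∀ n : ℕ, 2 ^ n * y < 1 → tau^[n] y = 2 ^ n * y
  | 0, _ => by simp
  | n + 1, h => by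
    have hn : 2 ^ n * y < 1 :=
      lt_of_le_of_lt (mul_le_mul_of_nonneg_right (pow_le_pow_right₀ one_le_two n.le_succ) hy) h
    rw [Function.iterate_succ_apply', iterate_tau_eq_two_pow_mul hy n hn,
      tau_eq_two_mul (by positivity) (by rwa [← mul_assoc, ← pow_succ']), pow_succ', mul_assoc]

lemma two_pow_mul_lt_one_of_two_pow_le_floor_one_div {y : ℝ} (hy : 0 < y)
    (hFB : ¬ FiniteBinary y) {n : ℕ} (h : 2 ^ n ≤ ⌊1 / y⌋) : 2 ^ n * y < 1 := by
  have hle : (2 : ℝ) ^ n ≤ 1 / y := by exact_mod_cast Int.le_floor.1 h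
  rw [le_div_iff₀ hy] at hle
  exact lt_of_le_of_ne hle fun h => hFB (.of_two_pow_mul_eq_one h)

lemma floor_one_div_two_pow_mul (y : ℝ) (n : ℕ) : ⌊1 / (2 ^ n * y)⌋ = ⌊1 / y⌋ / 2 ^ n := by
  have h := Int.floor_div_natCast (1 / y) (2 ^ n)
  push_cast at h
  rw [← h, div_div, mul_comm]

lemma floor_one_div_iterate_tau {y : ℝ} (hy : 0 < y) (hFB : ¬ FiniteBinary y) {n : ℕ}
    (h : 2 ^ n ≤ ⌊1 / y⌋) : ⌊1 / tau^[n] y⌋ = ⌊1 / y⌋ / 2 ^ n := by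
  rw [iterate_tau_eq_two_pow_mul hy.le n (two_pow_mul_lt_one_of_two_pow_le_floor_one_div hy hFB h),
    floor_one_div_two_pow_mul]

/-- For the doubling map digits `a_n = χ ∘ τ^{n-1}` with `χ(x) = ⌊1/x⌋`: if `x ∈ [0,1)` has no
finite binary expansion and `a_{i+1}(x) = r ≥ 2`, then for all `j ≤ ⌊log₂ r⌋` one has
`a_{i+1+j}(x) = ⌊r/2^j⌋`. -/
theorem stmt5 (x : ℝ) (hx : x ∈ Set.Ico (0 : ℝ) 1) (hΩ : ¬ FiniteBinary x)
    (i : ℕ) (r : ℕ) (hr : 2 ≤ r) (hai : ⌊1 / tau^[i] x⌋ = (r : ℤ)) :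
    ∀ j : ℕ, j ≤ Nat.log 2 r → ⌊1 / tau^[i + j] x⌋ = ((r / 2 ^ j : ℕ) : ℤ) := by
  intro j hj
  have hFB : ¬ FiniteBinary (tau^[i] x) := fun h => hΩ (.of_iterate_tau hx.1 h)
  have hpos : 0 < tau^[i] x :=
    (iterate_tau_nonneg hx.1 i).lt_of_ne fun h => hFB (h ▸ .zero)
  have h2j : 2 ^ j ≤ r := Nat.pow_le_of_le_log (by omega) hj
  rw [add_comm, Function.iterate_add_apply,
    floor_one_div_iterate_tau hpos hFB (by rw [hai]; exact_mod_cast h2j), hai]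
  push_cast
  rfl
end

section
/- For the induced digits β_n = χ ∘ τ_B^{n-1} of the doubling map, for every ψ ∈ Ψ, Lebesgue-almost surely only finitely many n satisfy the event that some i ≤ n has β_i ≥ n·ψ(⌊log n⌋). -/
/-!
Off `0`, the interval `[0,1)` splits into the cylinders `1/2 ≤ 2^k x < 1`, on which `τ_B` is the
affine branch `x ↦ 2^(k+1) x - 1`. The inverse slopes `2^-(k+1)` sum to `1`, so pulling back by
`τ_B` does not increase Lebesgue measure on `[0,1)`, and `τ_B^i x ≤ ε` has probability at most `ε` for
every `i`. A digit `β_i ≥ n ψ(m)` with `m = ⌊log n⌋` forces `τ_B^(i-1) x ≤ (e^m ψ(m))⁻¹` for some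
`i ≤ n ≤ e^(m+1)`; this block event has measure at most `e / ψ(m)`, which is summable in `m`, and
Borel–Cantelli applies because `⌊log n⌋ → ∞`.
-/

open MeasureTheory Set

/-- The first exit time to `B = [1/2,1)`, plus one. -/
noncomputable def phi (x : ℝ) : ℕ := sInf {n : ℕ | tau^[n] x ∈ Set.Ico (1 / 2 : ℝ) 1} + 1

/-- The jump transformation `τ_B(x) = τ^{φ(x)}(x)`. -/
noncomputable def tauB (x : ℝ) : ℝ := tau^[phi x] x

open Filter Real
open scoped ENNReal

lemma Int.fract_two_mul_fract {R : Type*} [Ring R] [LinearOrder R] [FloorRing R]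
    [IsOrderedRing R] (y : R) : Int.fract (2 * Int.fract y) = Int.fract (2 * y) := by
  have h : 2 * Int.fract y = 2 * y - ((2 * ⌊y⌋ : ℤ) : R) := by
    rw [Int.fract, mul_sub]; push_cast; rfl
  rw [h, Int.fract_sub_intCast]

lemma tau_iterate_eq_fract {x : ℝ} (hx : x ∈ Ico (0 : ℝ) 1) (n : ℕ) :
    tau^[n] x = Int.fract (2 ^ n * x) := by
  induction n with
  | zero => simpa using (Int.fract_eq_self.2 hx).symm
  | succ n ih =>
    rw [Function.iterate_succ_apply', ih, tau, Int.fract_two_mul_fract, pow_succ, mul_comm _ 2,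
      mul_assoc]

lemma tauB_mem_Ico (x : ℝ) : tauB x ∈ Ico (0 : ℝ) 1 := by
  rw [tauB, phi, Function.iterate_succ_apply', tau]
  exact ⟨Int.fract_nonneg _, Int.fract_lt_one _⟩

lemma tauB_iterate_mem_Ico {x : ℝ} (hx : x ∈ Ico (0 : ℝ) 1) (j : ℕ) :
    tauB^[j] x ∈ Ico (0 : ℝ) 1 := by
  cases j with
  | zero => exact hx
  | succ j => rw [Function.iterate_succ_apply']; exact tauB_mem_Ico _

lemma tauB_eq_of_mem_cylinder {k : ℕ} {x : ℝ} (hlo : 1 / 2 ≤ 2 ^ k * x) (hhi : 2 ^ k * x < 1) :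
    tauB x = 2 ^ (k + 1) * x - 1 := by
  have hx0 : 0 < x := pos_of_mul_pos_right (a := (2 : ℝ) ^ k) (by linarith) (by positivity)
  have hx : x ∈ Ico (0 : ℝ) 1 :=
    ⟨hx0.le, (le_mul_of_one_le_left hx0.le (one_le_pow₀ one_le_two)).trans_lt hhi⟩
  have hfirst : IsLeast {n : ℕ | tau^[n] x ∈ Ico (1 / 2 : ℝ) 1} k := by
    refine ⟨?_, fun n hn => not_lt.1 fun hnk => ?_⟩
    · change tau^[k] x ∈ Ico (1 / 2 : ℝ) 1
      rw [tau_iterate_eq_fract hx, Int.fract_eq_self.2 ⟨by linarith, hhi⟩]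
      exact ⟨hlo, hhi⟩
    · have hpow : (2 : ℝ) ^ n * 2 ≤ 2 ^ k := by
        rw [← pow_succ]; exact pow_le_pow_right₀ one_le_two hnk
      have hsmall : 2 ^ n * x < 1 / 2 := by nlinarith [mul_le_mul_of_nonneg_right hpow hx.1]
      change tau^[n] x ∈ Ico (1 / 2 : ℝ) 1 at hn
      rw [tau_iterate_eq_fract hx,
        Int.fract_eq_self.2 ⟨mul_nonneg (by positivity) hx.1, by linarith⟩] at hn
      exact hsmall.not_ge hn.1
  rw [tauB, phi, hfirst.csInf_eq, tau_iterate_eq_fract hx, Int.fract_eq_iff]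
  exact ⟨by rw [pow_succ]; linarith, by rw [pow_succ]; linarith, 1, by push_cast; ring⟩

lemma exists_mem_cylinder {x : ℝ} (h0 : 0 < x) (h1 : x < 1) :
    ∃ k : ℕ, 1 / 2 ≤ 2 ^ k * x ∧ 2 ^ k * x < 1 := by
  classical
  have hex : ∃ k : ℕ, 1 / 2 ≤ 2 ^ k * x := by
    obtain ⟨k, hk⟩ := pow_unbounded_of_one_lt (1 / (2 * x)) (one_lt_two (α := ℝ))
    exact ⟨k, by rw [div_lt_iff₀ (by positivity)] at hk; linarith⟩
  refine ⟨Nat.find hex, Nat.find_spec hex, ?_⟩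
  rcases hk : Nat.find hex with _ | k
  · simpa using h1
  · have hmin := Nat.find_min hex (k.lt_succ_self.trans_eq hk.symm)
    rw [pow_succ]
    linarith

lemma volume_preimage_mul_sub {a : ℝ} (ha : a ≠ 0) (b : ℝ) (S : Set ℝ) :
    volume ((fun x => a * x - b) ⁻¹' S) = ENNReal.ofReal |a⁻¹| * volume S := by
  have h : (fun x => a * x - b) ⁻¹' S = (fun x => a * x) ⁻¹' ((fun y => y + -b) ⁻¹' S) := by
    ext; simp [sub_eq_add_neg]
  rw [h, Real.volume_preimage_mul_left ha, measure_preimage_add_right]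

lemma tsum_ofReal_inv_two_pow_succ : ∑' k : ℕ, ENNReal.ofReal |((2 : ℝ) ^ (k + 1))⁻¹| = 1 := by
  have h : ∀ k : ℕ, ENNReal.ofReal |((2 : ℝ) ^ (k + 1))⁻¹| = 2⁻¹ ^ (k + 1) := fun k => by
    rw [abs_of_pos (by positivity), ← inv_pow, ENNReal.ofReal_pow (by norm_num),
      ENNReal.ofReal_inv_of_pos two_pos, ENNReal.ofReal_ofNat]
  rw [tsum_congr h, ENNReal.tsum_geometric_add_one, ENNReal.one_sub_inv_two,
    ENNReal.mul_inv_cancel (by norm_num) (by norm_num)]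

lemma volume_Ico_inter_preimage_tauB_le (S : Set ℝ) :
    volume (Ico (0 : ℝ) 1 ∩ tauB ⁻¹' S) ≤ volume S := by
  have hcover : Ico (0 : ℝ) 1 ∩ tauB ⁻¹' S ⊆
      {0} ∪ ⋃ k : ℕ, (fun x => 2 ^ (k + 1) * x - 1) ⁻¹' S := by
    rintro x ⟨hx, hxS⟩
    rcases hx.1.eq_or_lt with rfl | h0
    · exact Or.inl rfl
    · obtain ⟨k, hlo, hhi⟩ := exists_mem_cylinder h0 hx.2
      refine Or.inr (mem_iUnion.2 ⟨k, ?_⟩)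
      rwa [mem_preimage, ← tauB_eq_of_mem_cylinder hlo hhi]
  calc volume (Ico (0 : ℝ) 1 ∩ tauB ⁻¹' S)
      ≤ volume ({(0 : ℝ)} ∪ ⋃ k : ℕ, (fun x => 2 ^ (k + 1) * x - 1) ⁻¹' S) :=
        measure_mono hcover
    _ ≤ ∑' k : ℕ, volume ((fun x : ℝ => 2 ^ (k + 1) * x - 1) ⁻¹' S) := by
        refine (measure_union_le _ _).trans ?_
        rw [Real.volume_singleton, zero_add]
        exact measure_iUnion_le _
    _ = volume S := by
        simp_rw [volume_preimage_mul_sub (pow_ne_zero _ two_ne_zero), ENNReal.tsum_mul_right,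
          tsum_ofReal_inv_two_pow_succ, one_mul]

lemma volume_Ico_inter_preimage_tauB_iterate_le (j : ℕ) (S : Set ℝ) :
    volume (Ico (0 : ℝ) 1 ∩ (tauB^[j]) ⁻¹' S) ≤ volume S := by
  induction j with
  | zero => exact measure_mono inter_subset_right
  | succ j ih =>
    have hsub : Ico (0 : ℝ) 1 ∩ (tauB^[j + 1]) ⁻¹' S ⊆
        Ico (0 : ℝ) 1 ∩ tauB ⁻¹' (Ico (0 : ℝ) 1 ∩ (tauB^[j]) ⁻¹' S) := by
      rintro x ⟨hx, hxS⟩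
      rw [mem_preimage, Function.iterate_succ_apply] at hxS
      exact ⟨hx, tauB_mem_Ico x, hxS⟩
    exact (measure_mono hsub).trans ((volume_Ico_inter_preimage_tauB_le _).trans ih)

def orbitHitsBelow (K : ℕ) (ε : ℝ) : Set ℝ :=
  {x | x ∈ Ico (0 : ℝ) 1 ∧ ∃ i < K, tauB^[i] x ≤ ε}

lemma volume_orbitHitsBelow_le (K : ℕ) (ε : ℝ) :
    volume (orbitHitsBelow K ε) ≤ K * ENNReal.ofReal ε := by
  have hcover : orbitHitsBelow K ε ⊆
      ⋃ i ∈ Finset.range K, Ico (0 : ℝ) 1 ∩ (tauB^[i]) ⁻¹' Icc 0 ε := by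
    rintro x ⟨hx, i, hi, hle⟩
    exact mem_biUnion (Finset.mem_range.2 hi) ⟨hx, (tauB_iterate_mem_Ico hx i).1, hle⟩
  calc volume (orbitHitsBelow K ε)
      ≤ ∑ i ∈ Finset.range K, volume (Ico (0 : ℝ) 1 ∩ (tauB^[i]) ⁻¹' Icc 0 ε) :=
        (measure_mono hcover).trans (measure_biUnion_finset_le _ _)
    _ ≤ ∑ _i ∈ Finset.range K, volume (Icc (0 : ℝ) ε) :=
        Finset.sum_le_sum fun i _ => volume_Ico_inter_preimage_tauB_iterate_le i _
    _ = K * ENNReal.ofReal ε := by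
        rw [Finset.sum_const, Finset.card_range, nsmul_eq_mul, Real.volume_Icc, sub_zero]

lemma le_inv_of_le_floor_one_div {c y : ℝ} (hc : 0 < c) (h : c ≤ ⌊1 / y⌋) : y ≤ c⁻¹ := by
  have h' : c ≤ 1 / y := h.trans (Int.floor_le _)
  have hy : 0 < y := one_div_pos.1 (hc.trans_le h')
  rwa [le_inv_comm₀ hy hc, ← one_div]

lemma exp_floor_log_le {n : ℕ} (hn : 1 ≤ n) : exp ⌊log n⌋₊ ≤ n := by
  calc exp ⌊log n⌋₊ ≤ exp (log n) :=
        exp_le_exp.2 (Nat.floor_le (log_nonneg (by exact_mod_cast hn)))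
    _ = n := exp_log (by exact_mod_cast hn)

lemma le_floor_exp_floor_log_add_one (n : ℕ) : n ≤ ⌊exp (⌊log n⌋₊ + 1)⌋₊ := by
  rcases n.eq_zero_or_pos with rfl | hn
  · exact Nat.zero_le _
  · refine Nat.le_floor ?_
    calc (n : ℝ) = exp (log n) := (exp_log (by exact_mod_cast hn)).symm
      _ ≤ exp (⌊log n⌋₊ + 1) := exp_le_exp.2 (Nat.lt_floor_add_one _).le

lemma mem_orbitHitsBelow_of_le_digit {ψ : ℕ → ℝ} {n i : ℕ} {x : ℝ}
    (hψ : 0 < ψ ⌊log n⌋₊) (hx : x ∈ Ico (0 : ℝ) 1) (hi : i ∈ Finset.Icc 1 n)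
    (hdigit : (n : ℝ) * ψ ⌊log n⌋₊ ≤ (⌊1 / tauB^[i - 1] x⌋ : ℝ)) :
    x ∈ orbitHitsBelow ⌊exp (⌊log n⌋₊ + 1)⌋₊ (exp ⌊log n⌋₊ * ψ ⌊log n⌋₊)⁻¹ := by
  obtain ⟨hi1, hin⟩ := Finset.mem_Icc.1 hi
  have hn : 1 ≤ n := hi1.trans hin
  refine ⟨hx, i - 1, by have := le_floor_exp_floor_log_add_one n; omega, ?_⟩
  calc tauB^[i - 1] x ≤ ((n : ℝ) * ψ ⌊log n⌋₊)⁻¹ :=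
        le_inv_of_le_floor_one_div (mul_pos (by exact_mod_cast hn) hψ) hdigit
    _ ≤ (exp ⌊log n⌋₊ * ψ ⌊log n⌋₊)⁻¹ :=
        inv_anti₀ (by positivity) (mul_le_mul_of_nonneg_right (exp_floor_log_le hn) hψ.le)

lemma volume_orbitHitsBelow_exp_le (m : ℕ) {c : ℝ} (hc : 0 < c) :
    volume (orbitHitsBelow ⌊exp (m + 1)⌋₊ (exp m * c)⁻¹) ≤ ENNReal.ofReal (exp 1 / c) := by
  refine (volume_orbitHitsBelow_le _ _).trans ?_
  rw [← ENNReal.ofReal_natCast, ← ENNReal.ofReal_mul (Nat.cast_nonneg _)]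
  refine ENNReal.ofReal_le_ofReal ?_
  calc (⌊exp (m + 1)⌋₊ : ℝ) * (exp m * c)⁻¹ ≤ exp (m + 1) * (exp m * c)⁻¹ :=
        mul_le_mul_of_nonneg_right (Nat.floor_le (exp_pos _).le) (by positivity)
    _ = exp 1 / c := by
        rw [add_comm, exp_add]; field_simp

/-- For the induced digits `β_i = χ ∘ τ_B^{i-1}` (`χ(x) = ⌊1/x⌋`): for every `ψ` with
`∑ 1/ψ(n) < ∞`, Lebesgue-almost surely only finitely many `n` admit some `i ≤ n` with
`β_i ≥ n·ψ(⌊log n⌋)`. -/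
theorem stmt9 (ψ : ℕ → ℝ) (hψpos : ∀ n, 0 < ψ n) (hψ : Summable (fun n => 1 / ψ n)) :
    volume {x : ℝ | x ∈ Set.Ico (0 : ℝ) 1 ∧
      {n : ℕ | ∃ i ∈ Finset.Icc 1 n,
        (n : ℝ) * ψ ⌊Real.log n⌋₊ ≤ (⌊1 / tauB^[i - 1] x⌋ : ℝ)}.Infinite} = 0 := by
  set G : ℕ → Set ℝ := fun m => orbitHitsBelow ⌊exp (m + 1)⌋₊ (exp m * ψ m)⁻¹
  have hsum : ∑' m, volume (G m) ≠ ∞ := by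
    refine ne_top_of_le_ne_top ?_
      (ENNReal.tsum_le_tsum fun m => volume_orbitHitsBelow_exp_le m (hψpos m))
    rw [← ENNReal.ofReal_tsum_of_nonneg (fun m => (div_pos (exp_pos 1) (hψpos m)).le)
      ((hψ.mul_left (exp 1)).congr fun m => mul_one_div _ _)]
    exact ENNReal.ofReal_ne_top
  refine measure_mono_null ?_ (measure_limsup_atTop_eq_zero hsum)
  rintro x ⟨hx, hinf⟩
  rw [mem_limsup_iff_frequently_mem]
  exact (tendsto_nat_floor_atTop.comp (tendsto_log_atTop.comp tendsto_natCast_atTop_atTop))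
    |>.frequently_map (fun n : ℕ => ⌊log n⌋₊)
      (fun n ⟨i, hi, hdigit⟩ => mem_orbitHitsBelow_of_le_digit (hψpos _) hx hi hdigit)
      (Nat.frequently_atTop_iff_infinite.2 hinf)
end

section
/- For every ε > 0 there exist M ∈ ℕ and R > 0 such that for all m ≥ M and r ≥ R, the piecewise constant function v_m^r on [0,1) (taking value y_{min{j,⌊log₂ r⌋}, i} = 2^{min{j,⌊log₂ r⌋}+m+1}/(2^m - i - 1) on J_{j,i}^m = [1/2^j - (i+1)/2^{j+m}, 1/2^j - i/2^{j+m})) satisfies E(v_m^r) = 2(⌊log₂ r⌋ + 2)·∑_{i=0}^{2^{m-1}-1} 1/(2^m - i - 1) ≤ (2+ε)·log r. -/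
/-!
The cells `J_{j,i}^m`, `i < 2^{m-1}`, tile the dyadic band `[2^{-(j+1)}, 2^{-j})` (a point `x` of
the band lies in the cell with `i + 1 = ⌈(2^{-j} - x) 2^{j+m}⌉`), and the bands tile `(0,1)`.
Since `|J_{j,i}^m| y_{j,i} = 2^{min(j,L)-j} · 2/(2^m-i-1)` with `L = ⌊log₂ r⌋`, the expectation
factors as `(∑_j 2^{min(j,L)-j}) · 2 C_m = (L+2) · 2 C_m`, where `C_m = ∑_{k=2^{m-1}}^{2^m-1} 1/k`.
Comparing `1/k` with `log k - log (k-1)` gives `C_m ≤ log 2 + 2^{1-m}`, and `L log 2 ≤ log r`;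
so `E(v) ≤ 2 (1+δ)² log r` once `m` and `r` are large.
-/

open MeasureTheory Set Filter Topology Real

section Subdivision

variable {b d x : ℝ} {i n : ℕ}

theorem mem_Ico_sub_div_iff_ceil (hd : 0 < d) :
    x ∈ Ico (b - (i + 1) / d) (b - i / d) ↔ ⌈(b - x) * d⌉₊ = i + 1 := by
  rw [Nat.ceil_eq_iff i.succ_ne_zero, mem_Ico, sub_le_comm, le_div_iff₀ hd, lt_sub_comm,
    div_lt_iff₀ hd, and_comm]
  push_cast
  simp

theorem Ico_sub_div_subset_Ico (hd : 0 ≤ d) (hi : i < n) :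
    Ico (b - (i + 1) / d) (b - i / d) ⊆ Ico (b - n / d) b := by
  have hin : (i : ℝ) + 1 ≤ n := by exact_mod_cast hi
  apply Ico_subset_Ico
  · gcongr
  · exact sub_le_self b (by positivity)

theorem exists_lt_mem_Ico_sub_div (hd : 0 < d) (hx : x ∈ Ico (b - n / d) b) :
    ∃ i < n, x ∈ Ico (b - (i + 1) / d) (b - i / d) := by
  have hpos : 0 < (b - x) * d := mul_pos (sub_pos.2 hx.2) hd
  have hle : (b - x) * d ≤ n := by
    rw [← le_div_iff₀ hd, sub_le_comm]
    exact hx.1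
  have h₁ : 1 ≤ ⌈(b - x) * d⌉₊ := Nat.one_le_ceil_iff.2 hpos
  have h₂ : ⌈(b - x) * d⌉₊ ≤ n := Nat.ceil_le.2 hle
  exact ⟨⌈(b - x) * d⌉₊ - 1, by omega, (mem_Ico_sub_div_iff_ceil hd).2 (by omega)⟩

end Subdivision

theorem antitone_one_div_two_pow : Antitone fun j : ℕ => (1 : ℝ) / 2 ^ j :=
  fun _ _ h => one_div_le_one_div_of_le (by positivity) (pow_le_pow_right₀ one_le_two h)

theorem exists_mem_Ico_one_div_two_pow {x : ℝ} (hx : x ∈ Ioo 0 1) :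
    ∃ j : ℕ, x ∈ Ico (1 / 2 ^ (j + 1)) (1 / 2 ^ j) := by
  obtain ⟨k, hk₁, hk₂⟩ := exists_mem_Ico_zpow hx.1 one_lt_two
  have hk : k + 1 ≤ 0 := by
    by_contra! h
    have : (1 : ℝ) ≤ 2 ^ k := one_le_zpow₀ one_le_two (by omega)
    linarith [hx.2]
  obtain ⟨j, rfl⟩ : ∃ j : ℕ, k = -(j + 1 : ℕ) := ⟨(-(k + 1)).toNat, by omega⟩
  rw [show -((j + 1 : ℕ) : ℤ) + 1 = -(j : ℤ) by push_cast; ring] at hk₂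
  rw [zpow_neg, zpow_natCast, ← one_div] at hk₁ hk₂
  exact ⟨j, hk₁, hk₂⟩

/-- The interval `J_{j,i}^m`. -/
def dyadicCell (m j i : ℕ) : Set ℝ :=
  Ico (1 / 2 ^ j - (i + 1) / 2 ^ (j + m)) (1 / 2 ^ j - i / 2 ^ (j + m))

section DyadicCell

variable {m j i : ℕ}

theorem one_div_two_pow_sub_two_pow_div (hm : 1 ≤ m) (j : ℕ) :
    (1 : ℝ) / 2 ^ j - 2 ^ (m - 1) / 2 ^ (j + m) = 1 / 2 ^ (j + 1) := by
  obtain ⟨k, rfl⟩ : ∃ k, m = k + 1 := ⟨m - 1, by omega⟩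
  simp only [Nat.add_sub_cancel, pow_add, pow_one]
  field_simp
  ring

theorem dyadicCell_subset (hm : 1 ≤ m) (hi : i < 2 ^ (m - 1)) :
    dyadicCell m j i ⊆ Ico (1 / 2 ^ (j + 1)) (1 / 2 ^ j) := by
  have := Ico_sub_div_subset_Ico (b := 1 / 2 ^ j) (d := 2 ^ (j + m)) (by positivity) hi
  rwa [Nat.cast_pow, Nat.cast_ofNat, one_div_two_pow_sub_two_pow_div hm] at this

theorem exists_lt_mem_dyadicCell (hm : 1 ≤ m) {x : ℝ}
    (hx : x ∈ Ico (1 / 2 ^ (j + 1)) (1 / 2 ^ j)) : ∃ i < 2 ^ (m - 1), x ∈ dyadicCell m j i := by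
  rw [← one_div_two_pow_sub_two_pow_div hm] at hx
  exact exists_lt_mem_Ico_sub_div (by positivity) (by exact_mod_cast hx)

theorem pairwise_disjoint_dyadicCell (hm : 1 ≤ m) :
    Pairwise (Function.onFun Disjoint fun p : ℕ × Fin (2 ^ (m - 1)) => dyadicCell m p.1 p.2) := by
  rintro ⟨j, i⟩ ⟨j', i'⟩ hne
  dsimp only [Function.onFun]
  by_cases hj : j = j'
  · subst hj
    have hi : (i : ℕ) ≠ i' := fun h => hne (by rw [Fin.ext h])
    refine disjoint_left.2 fun x hx hx' => hi ?_
    have h := (mem_Ico_sub_div_iff_ceil (by positivity)).1 hx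
    have h' := (mem_Ico_sub_div_iff_ceil (by positivity)).1 hx'
    omega
  · exact (antitone_one_div_two_pow.pairwise_disjoint_on_Ico_succ hj).mono
      (dyadicCell_subset hm i.2) (dyadicCell_subset hm i'.2)

theorem iUnion_dyadicCell (hm : 1 ≤ m) :
    ⋃ p : ℕ × Fin (2 ^ (m - 1)), dyadicCell m p.1 p.2 = Ioo 0 1 := by
  ext x
  simp only [mem_iUnion, Prod.exists]
  constructor
  · rintro ⟨j, i, hx⟩
    obtain ⟨h₁, h₂⟩ := dyadicCell_subset hm i.2 hx
    exact ⟨(by positivity : (0 : ℝ) < 1 / 2 ^ (j + 1)).trans_le h₁,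
      h₂.trans_le (by simpa using antitone_one_div_two_pow (Nat.zero_le j))⟩
  · intro hx
    obtain ⟨j, hj⟩ := exists_mem_Ico_one_div_two_pow hx
    obtain ⟨i, hi, hxi⟩ := exists_lt_mem_dyadicCell hm hj
    exact ⟨j, ⟨i, hi⟩, hxi⟩

theorem volume_real_dyadicCell : volume.real (dyadicCell m j i) = 1 / 2 ^ (j + m) := by
  rw [dyadicCell, Real.volume_real_Ico_of_le (by gcongr; linarith)]
  ring

end DyadicCell

theorem hasSum_setIntegral_iUnion_of_eqOn_const {α E ι : Type*} [MeasurableSpace α]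
    [NormedAddCommGroup E] [NormedSpace ℝ E] [CompleteSpace E] [Countable ι] {μ : Measure α}
    {s : ι → Set α} {f : α → E} {c : ι → E} (hs : ∀ i, MeasurableSet (s i))
    (hd : Pairwise (Function.onFun Disjoint s)) (hμ : ∀ i, μ (s i) ≠ ⊤)
    (hf : ∀ i, EqOn f (fun _ => c i) (s i)) (hsum : Summable fun i => μ.real (s i) * ‖c i‖) :
    HasSum (fun i => μ.real (s i) • c i) (∫ x in ⋃ i, s i, f x ∂μ) := by
  have hpiece : ∀ i, ∫ x in s i, f x ∂μ = μ.real (s i) • c i := fun i => by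
    rw [setIntegral_congr_fun (hs i) (hf i), setIntegral_const]
  have hint : IntegrableOn f (⋃ i, s i) μ := by
    refine integrableOn_iUnion_of_summable_integral_norm (fun i => ?_) ?_
    · exact (integrableOn_const (hμ i)).congr_fun (hf i).symm (hs i)
    · convert hsum using 2 with i
      rw [setIntegral_congr_fun (hs i) fun x hx => congrArg norm (hf i hx), setIntegral_const,
        smul_eq_mul]
  simpa only [hpiece] using hasSum_integral_iUnion hs hd hint

theorem hasSum_two_pow_min_div_two_pow (L : ℕ) :
    HasSum (fun j : ℕ => (2 : ℝ) ^ min j L / 2 ^ j) (L + 2) := by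
  have hhead : ∑ j ∈ Finset.range (L + 1), (2 : ℝ) ^ min j L / 2 ^ j = L + 1 := by
    rw [Finset.sum_congr rfl fun j hj => by
      rw [min_eq_left (Nat.lt_succ_iff.1 (Finset.mem_range.1 hj)), div_self (by positivity)]]
    simp
  have htail : (fun n : ℕ => (2 : ℝ) ^ min (n + (L + 1)) L / 2 ^ (n + (L + 1)))
      = fun n => 1 / 2 / 2 ^ n := by
    funext n
    rw [min_eq_right (by omega), show n + (L + 1) = L + (n + 1) by omega, pow_add, pow_succ]
    field_simp
  refine (hasSum_nat_add_iff' (L + 1)).1 ?_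
  rw [htail, hhead, show (L + 2 : ℝ) - (L + 1) = 1 by ring]
  exact hasSum_geometric_two' 1

theorem hasSum_two_pow_min_div_two_pow_mul {κ : Type*} [Fintype κ] (L : ℕ) (b : κ → ℝ) :
    HasSum (fun p : ℕ × κ => (2 : ℝ) ^ min p.1 L / 2 ^ p.1 * b p.2) ((L + 2) * ∑ i, b i) := by
  have ha : Summable fun j : ℕ => ‖(2 : ℝ) ^ min j L / 2 ^ j‖ := by
    simpa only [Real.norm_of_nonneg (by positivity : (0 : ℝ) ≤ 2 ^ min _ L / 2 ^ _)] using
      (hasSum_two_pow_min_div_two_pow L).summable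
  exact (hasSum_two_pow_min_div_two_pow L).mul (hasSum_fintype b)
    (summable_mul_of_summable_norm ha .of_finite)

theorem two_pow_eq_two_mul_natCast_two_pow_sub_one {m : ℕ} (hm : 1 ≤ m) :
    (2 : ℝ) ^ m = 2 * ((2 ^ (m - 1) : ℕ) : ℝ) := by
  rw [Nat.cast_pow, Nat.cast_ofNat, ← pow_succ', Nat.sub_add_cancel hm]

theorem two_pow_sub_natCast_sub_one_pos {m i : ℕ} (hm : 1 ≤ m) (hi : i < 2 ^ (m - 1)) :
    0 < (2 : ℝ) ^ m - i - 1 := by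
  have hi' : (i : ℝ) + 1 ≤ (2 ^ (m - 1) : ℕ) := by exact_mod_cast hi
  have hpos : (1 : ℝ) ≤ (2 ^ (m - 1) : ℕ) := by exact_mod_cast Nat.one_le_two_pow
  rw [two_pow_eq_two_mul_natCast_two_pow_sub_one hm]
  linarith

theorem setIntegral_Ico_zero_one_of_eqOn_dyadicCell {m L : ℕ} (hm : 1 ≤ m) {v : ℝ → ℝ}
    (hv : ∀ j i : ℕ, i < 2 ^ (m - 1) → ∀ x ∈ dyadicCell m j i,
      v x = 2 ^ (min j L + m + 1) / ((2 : ℝ) ^ m - i - 1)) :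
    ∫ x in Ico (0 : ℝ) 1, v x =
      2 * ((L : ℝ) + 2) * ∑ i ∈ Finset.range (2 ^ (m - 1)), 1 / ((2 : ℝ) ^ m - i - 1) := by
  set N := 2 ^ (m - 1)
  set c : ℕ × Fin N → ℝ := fun p => 2 ^ (min p.1 L + m + 1) / ((2 : ℝ) ^ m - p.2 - 1)
  have hden : ∀ i : Fin N, 0 < (2 : ℝ) ^ m - i - 1 :=
    fun i => two_pow_sub_natCast_sub_one_pos hm i.2
  have hterm : ∀ p : ℕ × Fin N, volume.real (dyadicCell m p.1 p.2) * c p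
      = 2 ^ min p.1 L / 2 ^ p.1 * (2 / ((2 : ℝ) ^ m - p.2 - 1)) := fun p => by
    have hne := (hden p.2).ne'
    rw [volume_real_dyadicCell]
    simp only [c, pow_add, pow_one]
    field_simp
  have hprod : HasSum (fun p : ℕ × Fin N => volume.real (dyadicCell m p.1 p.2) * c p)
      ((L + 2) * ∑ i : Fin N, 2 / ((2 : ℝ) ^ m - i - 1)) := by
    simpa only [hterm] using hasSum_two_pow_min_div_two_pow_mul L _
  have hc : ∀ p, 0 ≤ c p := fun p => div_nonneg (by positivity) (hden p.2).le
  have hsum := hasSum_setIntegral_iUnion_of_eqOn_const (μ := volume)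
    (s := fun p : ℕ × Fin N => dyadicCell m p.1 p.2) (f := v) (c := c)
    (fun _ => measurableSet_Ico) (pairwise_disjoint_dyadicCell hm)
    (fun _ => measure_Ico_lt_top.ne) (fun p x hx => hv p.1 p.2 p.2.2 x hx)
    (by simpa only [Real.norm_of_nonneg (hc _)] using hprod.summable)
  rw [iUnion_dyadicCell hm, setIntegral_congr_set Ioo_ae_eq_Ico] at hsum
  rw [hsum.unique hprod, Fin.sum_univ_eq_sum_range (fun i => 2 / ((2 : ℝ) ^ m - i - 1)),
    Finset.mul_sum, Finset.mul_sum]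
  congr 1 with i
  ring

theorem inv_le_log_sub_log_sub_one {x : ℝ} (hx : 1 < x) : x⁻¹ ≤ log x - log (x - 1) := by
  have h := one_sub_inv_le_log_of_pos (show 0 < x / (x - 1) by apply div_pos <;> linarith)
  rwa [log_div (by linarith) (by linarith), inv_div, one_sub_div (by linarith), sub_sub_cancel,
    one_div] at h

theorem sum_range_one_div_two_mul_sub_le (n : ℕ) :
    ∑ i ∈ Finset.range n, 1 / (2 * (n : ℝ) - i - 1) ≤ log 2 + 1 / n := by
  rcases n with _ | k
  · simpa using (log_pos one_lt_two).le
  set g : ℕ → ℝ := fun i => log (2 * k + 1 - i)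
  have hterm : ∀ i ∈ Finset.range k,
      1 / (2 * ((k + 1 : ℕ) : ℝ) - i - 1) ≤ g i - g (i + 1) := by
    intro i hi
    have hik : (i : ℝ) + 1 ≤ k := by exact_mod_cast Finset.mem_range.1 hi
    have := inv_le_log_sub_log_sub_one (x := 2 * k + 1 - i) (by linarith)
    simp only [g]
    push_cast
    convert this using 3 <;> ring
  have htel : ∑ i ∈ Finset.range k, (g i - g (i + 1)) ≤ log 2 := by
    rw [Finset.sum_range_sub']
    simp only [g, CharP.cast_eq_zero, sub_zero]
    rw [show 2 * (k : ℝ) + 1 - k = k + 1 by ring, ← log_div (by positivity) (by positivity)]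
    apply log_le_log (by positivity)
    rw [div_le_iff₀ (by positivity)]
    linarith
  have hlast : 1 / (2 * ((k + 1 : ℕ) : ℝ) - k - 1) = 1 / (k + 1 : ℕ) := by
    push_cast
    ring_nf
  rw [Finset.sum_range_succ]
  linarith [Finset.sum_le_sum hterm]

theorem sum_range_one_div_two_pow_sub_le {m : ℕ} (hm : 1 ≤ m) :
    ∑ i ∈ Finset.range (2 ^ (m - 1)), 1 / ((2 : ℝ) ^ m - i - 1) ≤ log 2 + 2 / 2 ^ m := by
  have := sum_range_one_div_two_mul_sub_le (2 ^ (m - 1))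
  rwa [two_pow_eq_two_mul_natCast_two_pow_sub_one hm, ← div_div, div_self two_ne_zero]

theorem eventually_sum_le_mul_log_two {δ : ℝ} (hδ : 0 < δ) :
    ∀ᶠ m : ℕ in atTop,
      1 ≤ m ∧ ∑ i ∈ Finset.range (2 ^ (m - 1)), 1 / ((2 : ℝ) ^ m - i - 1) ≤ (1 + δ) * log 2 := by
  have hlim : Tendsto (fun m : ℕ => 2 / (2 : ℝ) ^ m) atTop (𝓝 0) :=
    tendsto_const_nhds.div_atTop (tendsto_pow_atTop_atTop_of_one_lt one_lt_two)
  filter_upwards [eventually_ge_atTop 1,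
    hlim.eventually (ge_mem_nhds (mul_pos hδ (log_pos one_lt_two)))] with m hm hsmall
  exact ⟨hm, by linarith [sum_range_one_div_two_pow_sub_le hm]⟩

theorem natLog_floor_mul_log_two_le {r : ℝ} (hr : 1 ≤ r) :
    (Nat.log 2 ⌊r⌋₊ : ℝ) * log 2 ≤ log r := by
  have h2L : (2 : ℝ) ^ Nat.log 2 ⌊r⌋₊ ≤ r :=
    calc (2 : ℝ) ^ Nat.log 2 ⌊r⌋₊ = ((2 ^ Nat.log 2 ⌊r⌋₊ : ℕ) : ℝ) := by push_cast; rfl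
      _ ≤ ⌊r⌋₊ := by exact_mod_cast Nat.pow_log_le_self 2 (Nat.floor_pos.2 hr).ne'
      _ ≤ r := Nat.floor_le (by linarith)
  simpa only [log_pow] using log_le_log (by positivity) h2L

theorem eventually_natLog_floor_add_two_mul_log_two_le {δ : ℝ} (hδ : 0 < δ) :
    ∀ᶠ r : ℝ in atTop, 1 ≤ r ∧ ((Nat.log 2 ⌊r⌋₊ : ℝ) + 2) * log 2 ≤ (1 + δ) * log r := by
  filter_upwards [eventually_ge_atTop 1, tendsto_log_atTop.eventually_ge_atTop (2 / δ)]
    with r hr hlog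
  have h2 : 2 * log 2 ≤ δ * log r := by
    rw [div_le_iff₀' hδ] at hlog
    linarith [log_two_lt_d9]
  exact ⟨hr, by linarith [natLog_floor_mul_log_two_le hr]⟩

/-- For every `ε > 0` there exist `M ∈ ℕ` and `R > 0` such that for all `m ≥ M` and `r ≥ R`:
any function `v` on `[0,1)` taking the value
`y_{min{j,⌊log₂ r⌋}, i} = 2^{min{j,⌊log₂ r⌋}+m+1}/(2^m - i - 1)` on
`J_{j,i}^m = [1/2^j - (i+1)/2^{j+m}, 1/2^j - i/2^{j+m})` satisfies
`E(v) = 2(⌊log₂ r⌋ + 2)·∑_{i=0}^{2^{m-1}-1} 1/(2^m - i - 1) ≤ (2+ε)·log r`. -/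
theorem stmt13 (ε : ℝ) (hε : 0 < ε) :
    ∃ M : ℕ, ∃ R : ℝ, 0 < R ∧ ∀ m : ℕ, M ≤ m → ∀ r : ℝ, R ≤ r → ∀ v : ℝ → ℝ,
      (∀ j : ℕ, ∀ i : ℕ, i < 2 ^ (m - 1) →
        ∀ x ∈ Set.Ico ((1 : ℝ) / 2 ^ j - (i + 1) / 2 ^ (j + m))
            ((1 : ℝ) / 2 ^ j - i / 2 ^ (j + m)),
          v x = 2 ^ (min j (Nat.log 2 ⌊r⌋₊) + m + 1) / ((2 : ℝ) ^ m - i - 1)) →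
      (∫ x in Set.Ico (0 : ℝ) 1, v x) =
          2 * ((Nat.log 2 ⌊r⌋₊ : ℝ) + 2) *
            ∑ i ∈ Finset.range (2 ^ (m - 1)), 1 / ((2 : ℝ) ^ m - i - 1) ∧
        (∫ x in Set.Ico (0 : ℝ) 1, v x) ≤ (2 + ε) * Real.log r := by
  set δ := min 1 (ε / 6)
  have hδ : 0 < δ := lt_min one_pos (by positivity)
  have hδε : 2 * (1 + δ) ^ 2 ≤ 2 + ε := by
    nlinarith [min_le_left 1 (ε / 6), min_le_right 1 (ε / 6)]
  obtain ⟨M, hM⟩ := eventually_atTop.1 (eventually_sum_le_mul_log_two hδ)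
  obtain ⟨R, hR⟩ := eventually_atTop.1 (eventually_natLog_floor_add_two_mul_log_two_le hδ)
  refine ⟨M, R, one_pos.trans_le (hR R le_rfl).1, fun m hm r hr v hv => ?_⟩
  obtain ⟨hm1, hC⟩ := hM m hm
  obtain ⟨hr1, hL⟩ := hR r hr
  rw [setIntegral_Ico_zero_one_of_eqOn_dyadicCell hm1 hv]
  refine ⟨rfl, ?_⟩
  set L : ℝ := ((Nat.log 2 ⌊r⌋₊ : ℕ) : ℝ)
  have hlog : 0 ≤ log r := log_nonneg hr1
  calc 2 * (L + 2) * ∑ i ∈ Finset.range (2 ^ (m - 1)), 1 / ((2 : ℝ) ^ m - i - 1)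
      ≤ 2 * (L + 2) * ((1 + δ) * log 2) := by gcongr
    _ = 2 * (1 + δ) * ((L + 2) * log 2) := by ring
    _ ≤ 2 * (1 + δ) * ((1 + δ) * log r) := by gcongr
    _ ≤ (2 + ε) * log r := by nlinarith
end

section
/- For the doubling map system, almost surely only finitely many n satisfy |∑_{k=0}^{n-1} φ(τ_B^k x) - 2n| > n^{3/4}; i.e., the Birkhoff sums of the exit time φ along the jump transformation τ_B satisfy φ_n(x) = 2n + O(n^{3/4}) almost surely. -/
open MeasureTheory Set

/-!
For `x ∈ [0,1)`, `τⁿx ∈ B` exactly when the `(n+1)`-st binary digit of `x` is `1`. Hence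
`φ_n(x)` is the position just after the `n`-th digit `1`, and among the first `φ_n(x)` digits
exactly `n` are ones: with the Rademacher walk `Z_m = ∑_{i<m} (±1)` of the digits,
`Z_{φ_n(x)}(x) = 2n - φ_n(x)`.

Lebesgue measure on `[0,1)` is the average of its images under the two inverse branches
`y ↦ y/2`, `y ↦ (y+1)/2` of `τ`, along which `Z_{m+1}` becomes `Z_m ∓ 1`. This gives the binomial
recursion for the moments of `Z_m`, whence `∫ Z_m⁸ ≤ 105 m⁴`. By Markov's inequality and
Borel–Cantelli, almost surely `|Z_m| ≤ m^{3/4}/4` for all large `m`. This forces infinitely many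
digits `1`, and at `m = φ_n(x)` it turns into `|φ_n(x) - 2n| ≤ n^{3/4}`.
-/

open Filter

open scoped Classical

theorem Nat.count_sInf_add_one {p : ℕ → Prop} [DecidablePred p] (hp : ∃ n, p n) :
    Nat.count p (sInf {n | p n} + 1) = 1 := by
  have hmem : p (sInf {n | p n}) := Nat.sInf_mem hp
  have hzero : Nat.nth p 0 = sInf {n | p n} := Nat.nth_zero
  rw [Nat.count_succ, if_pos hmem, ← hzero, Nat.count_nth_zero]

-- For `x ∈ [0,1)`, `τⁿx = 2ⁿx mod 1`, so this says that the `(n+1)`-st binary digit of `x` is 1.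
def digitOne (x : ℝ) (n : ℕ) : Prop := tau^[n] x ∈ Ico (1 / 2 : ℝ) 1

lemma phi_eq_sInf_digitOne (x : ℝ) : phi x = sInf {n | digitOne x n} + 1 := rfl

lemma digitOne_tau_iterate (x : ℝ) (s n : ℕ) :
    digitOne (tau^[s] x) n ↔ digitOne x (s + n) := by
  rw [digitOne, digitOne, add_comm, Function.iterate_add_apply]

noncomputable def phiSum (x : ℝ) (n : ℕ) : ℕ := ∑ k ∈ Finset.range n, phi (tauB^[k] x)

lemma phiSum_succ (x : ℝ) (n : ℕ) : phiSum x (n + 1) = phiSum x n + phi (tauB^[n] x) :=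
  Finset.sum_range_succ ..

lemma tauB_iterate_eq_tau_iterate_phiSum (x : ℝ) (n : ℕ) : tauB^[n] x = tau^[phiSum x n] x := by
  induction n with
  | zero => rfl
  | succ n ih =>
    rw [Function.iterate_succ_apply', ih, phiSum_succ, ← ih, tauB, ih, add_comm,
      Function.iterate_add_apply]

lemma count_digitOne_phiSum {x : ℝ} (hx : {n | digitOne x n}.Infinite) (n : ℕ) :
    Nat.count (digitOne x) (phiSum x n) = n := by
  induction n with
  | zero => rfl
  | succ n ih =>
    obtain ⟨j, hj, hlt⟩ := hx.exists_gt (phiSum x n)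
    have hnext : ∃ i, digitOne (tau^[phiSum x n] x) i :=
      ⟨j - phiSum x n, (digitOne_tau_iterate ..).2 (by rwa [Nat.add_sub_cancel' hlt.le])⟩
    rw [phiSum_succ, Nat.count_add, ih, tauB_iterate_eq_tau_iterate_phiSum,
      phi_eq_sInf_digitOne]
    simp_rw [← digitOne_tau_iterate]
    rw [Nat.count_sInf_add_one hnext]

noncomputable def rademacher (i : ℕ) (x : ℝ) : ℝ := if digitOne x i then 1 else -1

noncomputable def digitWalk (m : ℕ) (x : ℝ) : ℝ := ∑ i ∈ Finset.range m, rademacher i x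

lemma digitWalk_eq_two_mul_count_sub (m : ℕ) (x : ℝ) :
    digitWalk m x = 2 * Nat.count (digitOne x) m - m := by
  induction m with
  | zero => simp [digitWalk]
  | succ m ih =>
    rw [digitWalk, Finset.sum_range_succ, ← digitWalk, ih, Nat.count_succ, rademacher]
    split_ifs <;> push_cast <;> ring

lemma digitWalk_succ (m : ℕ) (x : ℝ) :
    digitWalk (m + 1) x = rademacher 0 x + digitWalk m (tau x) := by
  rw [digitWalk, Finset.sum_range_succ', add_comm]
  rfl

lemma tau_half {y : ℝ} (hy : y ∈ Ico (0 : ℝ) 1) : tau (y / 2) = y := by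
  rw [tau, mul_div_cancel₀ _ two_ne_zero, Int.fract_eq_self.2 hy]

lemma tau_half_add_half {y : ℝ} (hy : y ∈ Ico (0 : ℝ) 1) : tau (y / 2 + 1 / 2) = y := by
  rw [tau, show 2 * (y / 2 + 1 / 2) = y + 1 by ring, Int.fract_add_one, Int.fract_eq_self.2 hy]

lemma digitWalk_succ_half {y : ℝ} (hy : y ∈ Ico (0 : ℝ) 1) (m : ℕ) :
    digitWalk (m + 1) (y / 2) = digitWalk m y - 1 := by
  have h0 : ¬ digitOne (y / 2) 0 := fun h => by
    have : 1 / 2 ≤ y / 2 := h.1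
    linarith [hy.2]
  rw [digitWalk_succ, tau_half hy, rademacher, if_neg h0]
  ring

lemma digitWalk_succ_half_add_half {y : ℝ} (hy : y ∈ Ico (0 : ℝ) 1) (m : ℕ) :
    digitWalk (m + 1) (y / 2 + 1 / 2) = digitWalk m y + 1 := by
  have h0 : digitOne (y / 2 + 1 / 2) 0 := by
    change y / 2 + 1 / 2 ∈ Ico (1 / 2 : ℝ) 1
    constructor <;> linarith [hy.1, hy.2]
  rw [digitWalk_succ, tau_half_add_half hy, rademacher, if_pos h0]
  ring

lemma measurable_tau : Measurable tau :=
  measurable_fract.comp (measurable_const_mul 2)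

lemma measurable_digitWalk (m : ℕ) : Measurable (digitWalk m) := by
  refine Finset.measurable_sum _ fun i _ => Measurable.ite ?_ measurable_const measurable_const
  exact (measurable_tau.iterate i) measurableSet_Ico

lemma abs_digitWalk_le (m : ℕ) (x : ℝ) : |digitWalk m x| ≤ m := by
  calc |digitWalk m x| ≤ ∑ i ∈ Finset.range m, |rademacher i x| :=
        Finset.abs_sum_le_sum_abs _ _
    _ = m := by simp [rademacher, apply_ite]

lemma intervalIntegrable_pow_digitWalk (m k : ℕ) (c : ℝ) :
    IntervalIntegrable (fun x => (digitWalk m x + c) ^ k) volume 0 1 := by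
  refine (intervalIntegrable_const (c := (m + |c|) ^ k)).mono_fun
    (((measurable_digitWalk m).add_const c).pow_const k).aestronglyMeasurable
    (ae_of_all _ fun x => ?_)
  simp only [norm_pow, Real.norm_eq_abs]
  rw [abs_of_nonneg (by positivity : (0 : ℝ) ≤ m + |c|)]
  gcongr
  exact (abs_add_le _ _).trans (by linarith [abs_digitWalk_le m x])

lemma intervalIntegral_eq_half_add {g : ℝ → ℝ} (hg : IntervalIntegrable g volume 0 1) :
    ∫ x in (0 : ℝ)..1, g x =
      ((∫ y in (0 : ℝ)..1, g (y / 2)) + ∫ y in (0 : ℝ)..1, g (y / 2 + 1 / 2)) / 2 := by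
  rw [intervalIntegral.integral_comp_div _ two_ne_zero,
    intervalIntegral.integral_comp_div_add _ two_ne_zero, smul_eq_mul, smul_eq_mul, ← mul_add,
    mul_div_cancel_left₀ _ two_ne_zero, zero_div, zero_add, add_halves]
  refine (intervalIntegral.integral_add_adjacent_intervals ?_ ?_).symm
  · exact hg.mono_set (uIcc_subset_uIcc (by norm_num) (by norm_num))
  · exact hg.mono_set (uIcc_subset_uIcc (by norm_num) (by norm_num))

lemma intervalIntegral_congr_Ico {f g : ℝ → ℝ} (h : EqOn f g (Ico 0 1)) :
    ∫ x in (0 : ℝ)..1, f x = ∫ x in (0 : ℝ)..1, g x := by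
  refine intervalIntegral.integral_congr_ae ?_
  filter_upwards [Ico_ae_eq_Ioc (μ := volume) (a := (0 : ℝ)) (b := 1)] with x hx hmem
  rw [uIoc_of_le zero_le_one] at hmem
  exact h (hx.mpr hmem)

noncomputable def walkMoment (m k : ℕ) : ℝ := ∫ x in (0 : ℝ)..1, digitWalk m x ^ k

lemma sub_one_pow_add_add_one_pow_div_two (z : ℝ) (k : ℕ) :
    ((z - 1) ^ k + (z + 1) ^ k) / 2 =
      ∑ j ∈ Finset.range (k + 1), (1 + (-1) ^ (k - j)) / 2 * k.choose j * z ^ j := by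
  rw [sub_eq_add_neg, add_pow, add_pow, ← Finset.sum_add_distrib, Finset.sum_div]
  refine Finset.sum_congr rfl fun j _ => ?_
  ring

lemma walkMoment_succ (m k : ℕ) :
    walkMoment (m + 1) k =
      ∑ j ∈ Finset.range (k + 1), (1 + (-1) ^ (k - j)) / 2 * k.choose j * walkMoment m j := by
  have hint (c : ℝ) := intervalIntegrable_pow_digitWalk m k c
  rw [walkMoment,
    intervalIntegral_eq_half_add (by simpa using intervalIntegrable_pow_digitWalk (m + 1) k 0),
    intervalIntegral_congr_Ico fun y hy => congrArg (· ^ k) (digitWalk_succ_half hy m),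
    intervalIntegral_congr_Ico fun y hy => congrArg (· ^ k) (digitWalk_succ_half_add_half hy m),
    ← intervalIntegral.integral_add (by simpa [sub_eq_add_neg] using hint (-1)) (hint 1),
    ← intervalIntegral.integral_div]
  simp_rw [sub_one_pow_add_add_one_pow_div_two, walkMoment, ← intervalIntegral.integral_const_mul]
  refine intervalIntegral.integral_finsetSum fun j _ => ?_
  simpa using (intervalIntegrable_pow_digitWalk m j 0).const_mul _

lemma walkMoment_zero_right (m : ℕ) : walkMoment m 0 = 1 := by simp [walkMoment]

lemma walkMoment_zero_left {k : ℕ} (hk : k ≠ 0) : walkMoment 0 k = 0 := by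
  simp [walkMoment, digitWalk, hk]

lemma walkMoment_two_succ (m : ℕ) : walkMoment (m + 1) 2 = walkMoment m 2 + 1 := by
  norm_num [walkMoment_succ, Finset.sum_range_succ, walkMoment_zero_right, Nat.choose]
  ring

lemma walkMoment_four_succ (m : ℕ) :
    walkMoment (m + 1) 4 = walkMoment m 4 + 6 * walkMoment m 2 + 1 := by
  norm_num [walkMoment_succ, Finset.sum_range_succ, walkMoment_zero_right, Nat.choose]
  ring

lemma walkMoment_six_succ (m : ℕ) :
    walkMoment (m + 1) 6 = walkMoment m 6 + 15 * walkMoment m 4 + 15 * walkMoment m 2 + 1 := by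
  norm_num [walkMoment_succ, Finset.sum_range_succ, walkMoment_zero_right, Nat.choose]
  ring

lemma walkMoment_eight_succ (m : ℕ) :
    walkMoment (m + 1) 8 =
      walkMoment m 8 + 28 * walkMoment m 6 + 70 * walkMoment m 4 + 28 * walkMoment m 2 + 1 := by
  norm_num [walkMoment_succ, Finset.sum_range_succ, walkMoment_zero_right, Nat.choose]
  ring

lemma walkMoment_two (m : ℕ) : walkMoment m 2 = m := by
  induction m with
  | zero => simp [walkMoment_zero_left]
  | succ m ih => rw [walkMoment_two_succ, ih]; push_cast; ring

lemma walkMoment_four_le (m : ℕ) : walkMoment m 4 ≤ 3 * (m : ℝ) ^ 2 := by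
  induction m with
  | zero => simp [walkMoment_zero_left]
  | succ m ih => rw [walkMoment_four_succ, walkMoment_two]; push_cast; nlinarith

lemma walkMoment_six_le (m : ℕ) : walkMoment m 6 ≤ 15 * (m : ℝ) ^ 3 := by
  induction m with
  | zero => simp [walkMoment_zero_left]
  | succ m ih =>
    rw [walkMoment_six_succ, walkMoment_two]; push_cast
    nlinarith [walkMoment_four_le m, (Nat.cast_nonneg m : (0 : ℝ) ≤ m)]

lemma walkMoment_eight_le (m : ℕ) : walkMoment m 8 ≤ 105 * (m : ℝ) ^ 4 := by
  induction m with
  | zero => simp [walkMoment_zero_left]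
  | succ m ih =>
    rw [walkMoment_eight_succ, walkMoment_two]; push_cast
    nlinarith [walkMoment_four_le m, walkMoment_six_le m, (Nat.cast_nonneg m : (0 : ℝ) ≤ m)]

-- `|Z_m(x)| > m^{3/4}/4`, raised to the fourth power.
def largeDeviationSet (m : ℕ) : Set ℝ :=
  {x | x ∈ Ico 0 1 ∧ (m : ℝ) ^ 3 < (4 * |digitWalk m x|) ^ 4}

lemma volume_largeDeviationSet_le (m : ℕ) :
    volume (largeDeviationSet m) ≤ ENNReal.ofReal (4 ^ 8 * 105 / m ^ 2) := by
  rcases m.eq_zero_or_pos with rfl | hm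
  · simp [largeDeviationSet, digitWalk]
  set S := {x | (m : ℝ) ^ 6 ≤ 4 ^ 8 * digitWalk m x ^ 8}
  set μ := volume.restrict (Ioc (0 : ℝ) 1)
  have hsub : largeDeviationSet m ⊆ S ∩ Ico 0 1 := by
    rintro x ⟨hx, hlt⟩
    refine ⟨?_, hx⟩
    have := pow_lt_pow_left₀ hlt (by positivity) two_ne_zero
    change (m : ℝ) ^ 6 ≤ 4 ^ 8 * digitWalk m x ^ 8
    rw [← (by decide : Even 8).pow_abs (digitWalk m x)]
    linarith
  have hint : Integrable (fun x => 4 ^ 8 * digitWalk m x ^ 8) μ :=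
    (intervalIntegrable_iff_integrableOn_Ioc_of_le zero_le_one).1
      (by simpa using (intervalIntegrable_pow_digitWalk m 8 0).const_mul (4 ^ 8))
  have hmarkov : (m : ℝ) ^ 6 * μ.real S ≤ 4 ^ 8 * walkMoment m 8 := by
    have := mul_meas_ge_le_integral_of_nonneg (ae_of_all _ fun x => by positivity) hint
      ((m : ℝ) ^ 6)
    rwa [integral_const_mul, ← intervalIntegral.integral_of_le zero_le_one] at this
  have hbound : μ.real S ≤ 4 ^ 8 * 105 / m ^ 2 := by
    rw [le_div_iff₀ (by positivity)]
    refine le_of_mul_le_mul_left ?_ (by positivity : (0 : ℝ) < m ^ 4)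
    nlinarith [walkMoment_eight_le m]
  calc volume (largeDeviationSet m) ≤ volume (S ∩ Ico 0 1) := measure_mono hsub
    _ = μ S := by
      rw [← Measure.restrict_apply' measurableSet_Ico, Measure.restrict_congr_set Ico_ae_eq_Ioc]
    _ = ENNReal.ofReal (μ.real S) := (ofReal_measureReal).symm
    _ ≤ _ := ENNReal.ofReal_le_ofReal hbound

lemma volume_limsup_largeDeviationSet : volume (limsup largeDeviationSet atTop) = 0 := by
  have hsum : Summable fun m : ℕ => (4 : ℝ) ^ 8 * 105 / m ^ 2 := by
    simpa [div_eq_mul_inv] using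
      (Real.summable_nat_pow_inv.2 one_lt_two).mul_left ((4 : ℝ) ^ 8 * 105)
  refine measure_limsup_atTop_eq_zero
    (ne_top_of_le_ne_top ?_ (ENNReal.tsum_le_tsum volume_largeDeviationSet_le))
  rw [← ENNReal.ofReal_tsum_of_nonneg (fun m => by positivity) hsum]
  exact ENNReal.ofReal_ne_top

lemma le_of_pow_four_le_pow_three {a b : ℝ} (ha : 0 ≤ a) (hb : 1 ≤ b) (h : a ^ 4 ≤ b ^ 3) :
    a ≤ b :=
  (pow_le_pow_iff_left₀ ha (by linarith) four_ne_zero).1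
    (h.trans (pow_le_pow_right₀ hb (by norm_num)))

lemma le_rpow_three_fourths_of_pow_four_le {a b : ℝ} (ha : 0 ≤ a) (hb : 0 ≤ b)
    (h : a ^ 4 ≤ b ^ 3) : a ≤ b ^ (3 / 4 : ℝ) := by
  rw [← pow_le_pow_iff_left₀ ha (by positivity) four_ne_zero, ← Real.rpow_mul_natCast hb]
  norm_num
  exact h

lemma abs_sub_two_mul_le_rpow {n m : ℝ} (hm : 1 ≤ m) (h : (4 * |2 * n - m|) ^ 4 ≤ m ^ 3) :
    |m - 2 * n| ≤ n ^ (3 / 4 : ℝ) := by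
  rw [abs_sub_comm]
  have h4 : 4 * |2 * n - m| ≤ m := le_of_pow_four_le_pow_three (by positivity) hm h
  have hmn : 3 * m ≤ 8 * n := by linarith [neg_abs_le (2 * n - m)]
  have hcube := pow_le_pow_left₀ (by linarith) hmn 3
  refine le_rpow_three_fourths_of_pow_four_le (abs_nonneg _) (by linarith) ?_
  nlinarith [pow_nonneg (show 0 ≤ n by linarith) 3]

lemma infinite_digitOne_of_forall_ge {x : ℝ} {M : ℕ}
    (hM : ∀ m ≥ M, (4 * |digitWalk m x|) ^ 4 ≤ (m : ℝ) ^ 3) :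
    {n | digitOne x n}.Infinite := by
  intro hfin
  set m := M + 3 * hfin.toFinset.card + 1
  have hcount := Nat.count_le_card hfin m
  have h4 := le_of_pow_four_le_pow_three (by positivity) (Nat.one_le_cast.2 (by omega))
    (hM m (by omega))
  rw [digitWalk_eq_two_mul_count_sub] at h4
  have : (3 * m : ℝ) ≤ 8 * hfin.toFinset.card := by
    have : (Nat.count (digitOne x) m : ℝ) ≤ hfin.toFinset.card := by exact_mod_cast hcount
    linarith [neg_abs_le (2 * (Nat.count (digitOne x) m : ℝ) - m)]
  simp only [m] at this
  push_cast at this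
  linarith

lemma finite_deviations_of_eventually_not_mem {x : ℝ} (hx : x ∈ Ico 0 1)
    (h : ∀ᶠ m in atTop, x ∉ largeDeviationSet m) :
    {n : ℕ | (n : ℝ) ^ ((3 : ℝ) / 4) <
      |(∑ k ∈ Finset.range n, (phi (tauB^[k] x) : ℝ)) - 2 * n|}.Finite := by
  obtain ⟨M, hM⟩ := eventually_atTop.1 h
  have hbound (m : ℕ) (hm : m ≥ M) : (4 * |digitWalk m x|) ^ 4 ≤ (m : ℝ) ^ 3 :=
    not_lt.1 fun hlt => hM m hm ⟨hx, hlt⟩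
  have hinf := infinite_digitOne_of_forall_ge hbound
  refine (finite_Iio (max M 1)).subset fun n hn => ?_
  by_contra hlt
  have hge : max M 1 ≤ n := not_lt.1 hlt
  have hcount := count_digitOne_phiSum hinf n
  have hn_le : n ≤ phiSum x n := hcount.symm.trans_le (Nat.count_le _)
  have hdev := hbound (phiSum x n) (by omega)
  rw [digitWalk_eq_two_mul_count_sub, hcount] at hdev
  rw [Set.mem_ofPred_eq, ← Nat.cast_sum] at hn
  exact hn.not_ge <|
    abs_sub_two_mul_le_rpow (by exact_mod_cast (show 1 ≤ phiSum x n by omega)) hdev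

/-- Lebesgue-almost surely only finitely many `n` satisfy
`|∑_{k=0}^{n-1} φ(τ_B^k x) - 2n| > n^{3/4}`; i.e. `φ_n(x) = 2n + O(n^{3/4})` a.s. -/
theorem stmt17 :
    volume {x : ℝ | x ∈ Set.Ico (0 : ℝ) 1 ∧
      {n : ℕ | (n : ℝ) ^ ((3 : ℝ) / 4) <
        |(∑ k ∈ Finset.range n, (phi (tauB^[k] x) : ℝ)) - 2 * n|}.Infinite} = 0 := by
  refine measure_mono_null (fun x ⟨hx, hinf⟩ => ?_) volume_limsup_largeDeviationSet
  rw [mem_limsup_iff_frequently_mem]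
  by_contra h
  exact hinf (finite_deviations_of_eventually_not_mem hx (not_frequently.1 h))
end

section
/- Let τ̂ be the transfer operator of the doubling map with respect to Lebesgue measure, given by (τ̂ζ)(x) = (1/2)(ζ(x/2) + ζ((x+1)/2)). Then for every function ζ of bounded variation on [0,1), V(τ̂ζ) ≤ (1/2)·V(ζ), where V denotes total variation. Consequently, for all φ ∈ L¹ and ζ ∈ BV, the correlation satisfies |∫(φ∘τⁿ)·ζ dλ - ∫φ dλ·∫ζ dλ| ≤ 2^{-n}·‖φ‖₁·V(ζ). -/
/-!
`τ̂ζ` is the average of `ζ` composed with the two inverse branches `x ↦ x/2` and `x ↦ (x+1)/2`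
of `τ`. These map `[0,1)` monotonically onto `[0,1/2)` and `[1/2,1)`, so the variations of the two
compositions add up to at most `V(ζ)`, whence the factor `1/2`.

Lebesgue measure on `[0,1)` is the average of its images under the two inverse branches, so
`∫ τ̂F = ∫ F`. For `F = (φ ∘ τ) ζ` one has `τ̂F = φ · τ̂ζ`, which gives the duality
`∫ (φ ∘ τⁿ) ζ = ∫ φ · τ̂ⁿζ` and, with `φ = 1`, `∫ τ̂ⁿζ = ∫ ζ`. A function `g` of bounded variation
stays within `V(g)` of its mean, so `|∫ φ g - ∫ φ ∫ g| ≤ ‖φ‖₁ V(g)`; take `g = τ̂ⁿζ`.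
-/

open MeasureTheory Set

/-- The transfer operator of the doubling map with respect to Lebesgue measure:
`(τ̂ζ)(x) = (1/2)(ζ(x/2) + ζ((x+1)/2))`. -/
noncomputable def transferOp (ζ : ℝ → ℝ) (x : ℝ) : ℝ := (ζ (x / 2) + ζ ((x + 1) / 2)) / 2

section BoundedVariation

variable {α : Type*} [LinearOrder α]

namespace eVariationOn

variable {E : Type*}

theorem add_le [SeminormedAddCommGroup E] (f g : α → E) (s : Set α) :
    eVariationOn (f + g) s ≤ eVariationOn f s + eVariationOn g s := by
  refine iSup_le fun ⟨n, u, hu, us⟩ => ?_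
  calc ∑ i ∈ Finset.range n, edist ((f + g) (u (i + 1))) ((f + g) (u i))
      ≤ ∑ i ∈ Finset.range n,
          (edist (f (u (i + 1))) (f (u i)) + edist (g (u (i + 1))) (g (u i))) :=
        Finset.sum_le_sum fun i _ => edist_add_add_le _ _ _ _
    _ ≤ eVariationOn f s + eVariationOn g s := by
        rw [Finset.sum_add_distrib]
        exact add_le_add (sum_le hu us) (sum_le hu us)

theorem const_smul_le {𝕜 : Type*} [SeminormedRing 𝕜] [SeminormedAddCommGroup E] [Module 𝕜 E]
    [NormSMulClass 𝕜 E] (c : 𝕜) (f : α → E) (s : Set α) :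
    eVariationOn (c • f) s ≤ ‖c‖₊ * eVariationOn f s := by
  refine iSup_le fun ⟨n, u, hu, us⟩ => ?_
  calc ∑ i ∈ Finset.range n, edist ((c • f) (u (i + 1))) ((c • f) (u i))
      = ‖c‖₊ * ∑ i ∈ Finset.range n, edist (f (u (i + 1))) (f (u i)) := by
        simp only [Pi.smul_apply, edist_smul₀, ENNReal.smul_def, smul_eq_mul, Finset.mul_sum]
    _ ≤ ‖c‖₊ * eVariationOn f s := by gcongr; exact sum_le hu us

end eVariationOn

theorem BoundedVariationOn.abs_le {f : α → ℝ} {s : Set α}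
    (hf : BoundedVariationOn f s) {a x : α} (ha : a ∈ s) (hx : x ∈ s) :
    |f x| ≤ |f a| + (eVariationOn f s).toReal := by
  have := hf.dist_le hx ha
  rw [Real.dist_eq] at this
  linarith [abs_sub_abs_le_abs_sub (f x) (f a)]

variable [MeasurableSpace α] {μ : Measure α} [IsProbabilityMeasure μ] {s : Set α}

theorem BoundedVariationOn.abs_sub_integral_le {g : α → ℝ} (hg : BoundedVariationOn g s)
    (hs : ∀ᵐ y ∂μ, y ∈ s) (hgi : Integrable g μ) {x : α} (hx : x ∈ s) :
    |g x - ∫ y, g y ∂μ| ≤ (eVariationOn g s).toReal := by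
  have hrepr : g x - ∫ y, g y ∂μ = ∫ y, (g x - g y) ∂μ := by
    rw [integral_sub (integrable_const _) hgi, integral_const, probReal_univ, one_smul]
  rw [hrepr, ← Real.norm_eq_abs]
  refine (norm_integral_le_of_norm_le_const (C := (eVariationOn g s).toReal)
    (hs.mono fun y hy => ?_)).trans_eq (by simp)
  rw [Real.norm_eq_abs, ← Real.dist_eq]
  exact hg.dist_le hx hy

theorem BoundedVariationOn.abs_integral_mul_sub_le {φ g : α → ℝ} (hg : BoundedVariationOn g s)
    (hs : ∀ᵐ y ∂μ, y ∈ s) (hφ : Integrable φ μ) (hgm : AEStronglyMeasurable g μ) :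
    |∫ x, φ x * g x ∂μ - (∫ x, φ x ∂μ) * ∫ x, g x ∂μ| ≤
      (∫ x, |φ x| ∂μ) * (eVariationOn g s).toReal := by
  obtain ⟨a, ha⟩ := hs.exists
  have hgC : ∀ᵐ x ∂μ, ‖g x‖ ≤ |g a| + (eVariationOn g s).toReal :=
    hs.mono fun x hx => hg.abs_le ha hx
  have hgi : Integrable g μ := Integrable.of_bound hgm _ hgC
  have hcentre : ∫ x, φ x * g x ∂μ - (∫ x, φ x ∂μ) * ∫ x, g x ∂μ =
      ∫ x, φ x * (g x - ∫ y, g y ∂μ) ∂μ := by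
    simp only [mul_sub]
    rw [integral_sub (hφ.mul_bdd hgm hgC) (hφ.mul_const _), integral_mul_const]
  rw [hcentre, ← Real.norm_eq_abs, ← integral_mul_const]
  refine norm_integral_le_of_norm_le (hφ.abs.mul_const _) (hs.mono fun x hx => ?_)
  rw [norm_mul, Real.norm_eq_abs, Real.norm_eq_abs]
  exact mul_le_mul_of_nonneg_left (hg.abs_sub_integral_le hs hgi hx) (abs_nonneg _)

end BoundedVariation

theorem eVariationOn_transferOp_le (ζ : ℝ → ℝ) :
    eVariationOn (transferOp ζ) (Ico 0 1) ≤ 2⁻¹ * eVariationOn ζ (Ico 0 1) := by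
  have hsplit : transferOp ζ = (2⁻¹ : ℝ) • ((ζ ∘ (· / 2)) + (ζ ∘ fun x => (x + 1) / 2)) := by
    funext x; simp only [transferOp, Pi.smul_apply, Pi.add_apply, Function.comp_apply,
      smul_eq_mul]; ring
  have hleft : eVariationOn (ζ ∘ (· / 2)) (Ico 0 1) ≤ eVariationOn ζ (Ico 0 2⁻¹) :=
    eVariationOn.comp_le_of_monotoneOn ζ _ (fun x _ y _ hxy => by linarith)
      (fun x hx => ⟨by linarith [hx.1], by linarith [hx.2]⟩)
  have hright : eVariationOn (ζ ∘ fun x => (x + 1) / 2) (Ico 0 1) ≤ eVariationOn ζ (Ico 2⁻¹ 1) :=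
    eVariationOn.comp_le_of_monotoneOn ζ _ (fun x _ y _ hxy => by linarith)
      (fun x hx => ⟨by linarith [hx.1], by linarith [hx.2]⟩)
  have hunion : eVariationOn ζ (Ico 0 2⁻¹) + eVariationOn ζ (Ico 2⁻¹ 1) ≤
      eVariationOn ζ (Ico 0 1) := by
    have := eVariationOn.add_le_union ζ fun x (hx : x ∈ Ico (0 : ℝ) 2⁻¹) y
      (hy : y ∈ Ico 2⁻¹ 1) => hx.2.le.trans hy.1
    rwa [Ico_union_Ico_eq_Ico (by norm_num) (by norm_num)] at this
  calc eVariationOn (transferOp ζ) (Ico 0 1)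
      ≤ ‖(2⁻¹ : ℝ)‖₊ * (eVariationOn (ζ ∘ (· / 2)) (Ico 0 1) +
          eVariationOn (ζ ∘ fun x => (x + 1) / 2) (Ico 0 1)) := by
        rw [hsplit]
        exact (eVariationOn.const_smul_le _ _ _).trans (by gcongr; exact eVariationOn.add_le _ _ _)
    _ ≤ 2⁻¹ * eVariationOn ζ (Ico 0 1) := by
        have : ((‖(2⁻¹ : ℝ)‖₊ : NNReal) : ENNReal) = 2⁻¹ := by simp
        rw [this]
        gcongr
        exact (add_le_add hleft hright).trans hunion

theorem eVariationOn_transferOp_iterate_le (ζ : ℝ → ℝ) (n : ℕ) :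
    eVariationOn (transferOp^[n] ζ) (Ico 0 1) ≤ 2⁻¹ ^ n * eVariationOn ζ (Ico 0 1) := by
  induction n with
  | zero => simp
  | succ n ih =>
    rw [Function.iterate_succ_apply', pow_succ', mul_assoc]
    exact (eVariationOn_transferOp_le _).trans (by gcongr)

theorem BoundedVariationOn.transferOp_iterate {ζ : ℝ → ℝ} (hζ : BoundedVariationOn ζ (Ico 0 1))
    (n : ℕ) : BoundedVariationOn (transferOp^[n] ζ) (Ico 0 1) :=
  ne_top_of_le_ne_top (ENNReal.mul_ne_top (by simp) hζ) (eVariationOn_transferOp_iterate_le ζ n)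

theorem BoundedVariationOn.toReal_eVariationOn_transferOp_iterate_le {ζ : ℝ → ℝ}
    (hζ : BoundedVariationOn ζ (Ico 0 1)) (n : ℕ) :
    (eVariationOn (transferOp^[n] ζ) (Ico 0 1)).toReal ≤
      2⁻¹ ^ n * (eVariationOn ζ (Ico 0 1)).toReal := by
  simpa using ENNReal.toReal_mono (ENNReal.mul_ne_top (by simp) hζ)
    (eVariationOn_transferOp_iterate_le ζ n)

theorem measurableEmbedding_add_div_two (c : ℝ) :
    MeasurableEmbedding fun x : ℝ => (x + c) / 2 := by
  have : (fun x : ℝ => (x + c) / 2) = (· * 2⁻¹) ∘ (· + c) := by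
    funext x; simp [div_eq_mul_inv]
  rw [this]
  exact (measurableEmbedding_mulRight₀ (by norm_num)).comp (measurableEmbedding_addRight c)

theorem map_volume_add_div_two (c : ℝ) :
    volume.map (fun x : ℝ => (x + c) / 2) = (2 : ENNReal) • volume := by
  have : (fun x : ℝ => (x + c) / 2) = (· * 2⁻¹) ∘ (· + c) := by
    funext x; simp [div_eq_mul_inv]
  rw [this, ← Measure.map_map (by fun_prop) (by fun_prop), map_add_right_eq_self,
    Real.map_volume_mul_right (by norm_num)]
  norm_num

theorem map_volume_restrict_Ico_add_div_two (c : ℝ) :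
    (volume.restrict (Ico (0 : ℝ) 1)).map (fun x => (x + c) / 2) =
      (2 : ENNReal) • volume.restrict (Ico (c / 2) ((1 + c) / 2)) := by
  have hpre : (fun x : ℝ => (x + c) / 2) ⁻¹' Ico (c / 2) ((1 + c) / 2) = Ico 0 1 := by
    ext x
    simp only [mem_preimage, mem_Ico]
    constructor <;> rintro ⟨h₁, h₂⟩ <;> constructor <;> linarith
  rw [← hpre, ← (measurableEmbedding_add_div_two c).restrict_map, map_volume_add_div_two,
    Measure.restrict_smul]

theorem volume_restrict_Ico_eq_half_smul_map_add_map :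
    volume.restrict (Ico (0 : ℝ) 1) = (2⁻¹ : ENNReal) •
      ((volume.restrict (Ico (0 : ℝ) 1)).map (· / 2) +
        (volume.restrict (Ico (0 : ℝ) 1)).map (fun x => (x + 1) / 2)) := by
  have h₀ := map_volume_restrict_Ico_add_div_two 0
  have h₁ := map_volume_restrict_Ico_add_div_two 1
  simp only [add_zero, zero_div] at h₀
  rw [h₀, h₁, ← smul_add, smul_smul, ENNReal.inv_mul_cancel (by norm_num) (by norm_num), one_smul,
    ← Measure.restrict_union Ico_disjoint_Ico_same measurableSet_Ico]
  norm_num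

theorem integrableOn_Ico_iff_comp_halves {F : ℝ → ℝ} :
    IntegrableOn F (Ico 0 1) ↔ IntegrableOn (fun x => F (x / 2)) (Ico 0 1) ∧
      IntegrableOn (fun x => F ((x + 1) / 2)) (Ico 0 1) := by
  have h₀ : MeasurableEmbedding fun x : ℝ => x / 2 := by
    simpa using measurableEmbedding_add_div_two 0
  rw [IntegrableOn, volume_restrict_Ico_eq_half_smul_map_add_map,
    integrable_smul_measure (by norm_num) (by norm_num), integrable_add_measure,
    h₀.integrable_map_iff, (measurableEmbedding_add_div_two 1).integrable_map_iff]
  rfl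

theorem integral_transferOp {F : ℝ → ℝ} (hF : IntegrableOn F (Ico 0 1)) :
    ∫ x in Ico 0 1, transferOp F x = ∫ x in Ico 0 1, F x := by
  have h₀ : MeasurableEmbedding fun x : ℝ => x / 2 := by
    simpa using measurableEmbedding_add_div_two 0
  obtain ⟨hF₀, hF₁⟩ := integrableOn_Ico_iff_comp_halves.1 hF
  conv_rhs => rw [volume_restrict_Ico_eq_half_smul_map_add_map]
  rw [integral_smul_measure, integral_add_measure (h₀.integrable_map_iff.2 hF₀)
      ((measurableEmbedding_add_div_two 1).integrable_map_iff.2 hF₁),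
    h₀.integral_map, (measurableEmbedding_add_div_two 1).integral_map]
  simp only [transferOp]
  rw [integral_div, integral_add hF₀ hF₁]
  simp [div_eq_inv_mul]

theorem tau_div_two (x : ℝ) : tau (x / 2) = Int.fract x := by
  simp [tau, mul_div_cancel₀]

theorem integrableOn_comp_tau {φ : ℝ → ℝ} (hφ : IntegrableOn φ (Ico 0 1)) :
    IntegrableOn (fun x => φ (tau x)) (Ico 0 1) := by
  have hfract : IntegrableOn (fun x => φ (Int.fract x)) (Ico 0 1) :=
    hφ.congr_fun (fun x hx => by rw [Int.fract_eq_self.2 hx]) measurableSet_Ico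
  refine integrableOn_Ico_iff_comp_halves.2 ⟨?_, ?_⟩
  · simpa only [tau_div_two] using hfract
  · simpa only [tau_div_two, Int.fract_add_one] using hfract

theorem transferOp_comp_tau_mul (φ ζ : ℝ → ℝ) :
    transferOp (fun x => φ (tau x) * ζ x) = fun x => φ (Int.fract x) * transferOp ζ x := by
  funext x
  simp only [transferOp, tau_div_two, Int.fract_add_one]
  ring

theorem integral_comp_tau_mul {φ ζ : ℝ → ℝ}
    (h : IntegrableOn (fun x => φ (tau x) * ζ x) (Ico 0 1)) :
    ∫ x in Ico 0 1, φ (tau x) * ζ x = ∫ x in Ico 0 1, φ x * transferOp ζ x := by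
  rw [← integral_transferOp h, transferOp_comp_tau_mul]
  exact setIntegral_congr_fun measurableSet_Ico fun x hx => by rw [Int.fract_eq_self.2 hx]

theorem measurable_transferOp_iterate {ζ : ℝ → ℝ} (hζ : Measurable ζ) (n : ℕ) :
    Measurable (transferOp^[n] ζ) :=
  Function.Iterate.rec (fun g => Measurable g) hζ (fun _ hg => by unfold transferOp; fun_prop) n

theorem abs_transferOp_le {ζ : ℝ → ℝ} {C : ℝ} (hζ : ∀ x ∈ Ico (0 : ℝ) 1, |ζ x| ≤ C) :
    ∀ x ∈ Ico (0 : ℝ) 1, |transferOp ζ x| ≤ C := by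
  intro x hx
  have h₀ := hζ (x / 2) ⟨by linarith [hx.1], by linarith [hx.2]⟩
  have h₁ := hζ ((x + 1) / 2) ⟨by linarith [hx.1], by linarith [hx.2]⟩
  rw [transferOp, abs_div, abs_two]
  linarith [abs_add_le (ζ (x / 2)) (ζ ((x + 1) / 2))]

theorem integral_comp_tau_iterate_mul {φ ζ : ℝ → ℝ} {C : ℝ} (hφ : IntegrableOn φ (Ico 0 1))
    (hζ : Measurable ζ) (hζC : ∀ x ∈ Ico (0 : ℝ) 1, |ζ x| ≤ C) (n : ℕ) :
    ∫ x in Ico 0 1, φ (tau^[n] x) * ζ x = ∫ x in Ico 0 1, φ x * transferOp^[n] ζ x := by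
  induction n generalizing φ with
  | zero => rfl
  | succ n ih =>
    have hbdd : ∀ x ∈ Ico (0 : ℝ) 1, |(transferOp^[n] ζ) x| ≤ C :=
      Function.Iterate.rec (fun g : ℝ → ℝ => ∀ x ∈ Ico (0 : ℝ) 1, |g x| ≤ C) hζC
        (fun _ => abs_transferOp_le) n
    have hint : IntegrableOn (fun x => φ (tau x) * (transferOp^[n] ζ) x) (Ico 0 1) :=
      (integrableOn_comp_tau hφ).mul_bdd (measurable_transferOp_iterate hζ n).aestronglyMeasurable
        (ae_restrict_of_forall_mem measurableSet_Ico hbdd)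
    simp only [Function.iterate_succ_apply']
    rw [ih (integrableOn_comp_tau hφ), integral_comp_tau_mul hint]

instance isProbabilityMeasure_volume_restrict_Ico :
    IsProbabilityMeasure (volume.restrict (Ico (0 : ℝ) 1)) :=
  ⟨by simp⟩

/-- The transfer operator of the doubling map contracts total variation on `[0,1)` by a factor
`1/2`; consequently, for all `φ ∈ L¹` and `ζ ∈ BV`,
`|∫(φ∘τⁿ)·ζ dλ - ∫φ dλ·∫ζ dλ| ≤ 2^{-n}·‖φ‖₁·V(ζ)`. -/
theorem stmt18 :
    (∀ ζ : ℝ → ℝ,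
      eVariationOn (transferOp ζ) (Set.Ico (0 : ℝ) 1) ≤
        (1 / 2 : ENNReal) * eVariationOn ζ (Set.Ico (0 : ℝ) 1)) ∧
    (∀ (φ ζ : ℝ → ℝ) (n : ℕ),
      Integrable φ (volume.restrict (Set.Ico (0 : ℝ) 1)) → Measurable ζ →
      BoundedVariationOn ζ (Set.Ico (0 : ℝ) 1) →
      |(∫ x in Set.Ico (0 : ℝ) 1, φ (tau^[n] x) * ζ x) -
          (∫ x in Set.Ico (0 : ℝ) 1, φ x) * ∫ x in Set.Ico (0 : ℝ) 1, ζ x| ≤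
        (2 : ℝ) ^ (-(n : ℝ)) * (∫ x in Set.Ico (0 : ℝ) 1, |φ x|) *
          (eVariationOn ζ (Set.Ico (0 : ℝ) 1)).toReal) := by
  refine ⟨fun ζ => by simpa only [one_div] using eVariationOn_transferOp_le ζ,
    fun φ ζ n hφ hζ hbv => ?_⟩
  have hζC : ∀ x ∈ Ico (0 : ℝ) 1, |ζ x| ≤ _ := fun x hx =>
    hbv.abs_le (left_mem_Ico.2 zero_lt_one) hx
  have hmean : ∫ x in Ico 0 1, ζ x = ∫ x in Ico 0 1, transferOp^[n] ζ x := by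
    simpa using integral_comp_tau_iterate_mul (integrable_const (1 : ℝ)) hζ hζC n
  rw [integral_comp_tau_iterate_mul hφ hζ hζC n, hmean]
  refine ((hbv.transferOp_iterate n).abs_integral_mul_sub_le (ae_restrict_mem measurableSet_Ico)
    hφ (measurable_transferOp_iterate hζ n).aestronglyMeasurable).trans ?_
  have hφ_nonneg : 0 ≤ ∫ x in Ico 0 1, |φ x| := integral_nonneg fun x => abs_nonneg _
  rw [Real.rpow_neg zero_le_two, Real.rpow_natCast, ← inv_pow, mul_comm _ (∫ x in Ico 0 1, |φ x|),
    mul_assoc]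
  gcongr
  exact hbv.toReal_eVariationOn_transferOp_iterate_le n
end
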